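/- arXiv:2107.11248 — 6 statements merged into one kernel-verified Lean document; each statement's English description precedes it below -/
import Mathlib

section
/- Let $V$ be a $d$-dimensional real normed space, let $v_{i,j}\in V$ ($1\le i\le n$, $1\le j\le m$) satisfy $\|v_{i,j}\|\le 1$, and set $x_k=\frac{1}{m}\sum_{i=1}^k\sum_{j=1}^m v_{i,j}$. Then for every $p\in\{1,\dots,m\}$ there exist sets $I_1,\dots,I_n\subseteq\{1,\dots,m\}$ with $|I_k|=p$ for all $k$ and $\|\sum_{i=1}^k\sum_{j\in I_i}v_{i,j} - p\,x_k\| \le 8d^2$ for all $k=1,\dots,n$. -/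
/-!
Online iterative rounding. Start from the fractional matrix `t₀ ≡ p / m`, whose rows sum to `p`,
and release the rows one at a time. After row `k` is released, move the current matrix `t`,
keeping every row sum and the vector `∑ t_{ij} v_{ij}`, to an extreme point of the polytope in
which only the released, still fractional entries are free (Krein–Milman). At an extreme point
the columns `(e_i, v_{ij})` of the free fractional entries are linearly independent, so there are
at most (number of rows meeting them) `+ d` of them; as an integral row sum forbids a row with
exactly one fractional entry, there are at most `2d`. Entries that reached `0` or `1` never move
again, so a final rounding compatible with the last matrix is compatible with all intermediate
ones, and the error of the prefix ending at row `k` is at most the number of fractional entries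
at time `k + 1`, that is `2d ≤ 8d²`.
-/

open Finset Filter Module Topology

theorem eq_zero_or_eq_one_of_notMem_Ioo {a : ℝ} (h : a ∈ Set.Icc 0 1) (h' : a ∉ Set.Ioo 0 1) :
    a = 0 ∨ a = 1 := by
  simpa using (Set.Icc_sdiff_Ioo_same zero_le_one).subset ⟨h, h'⟩

section ExtremePoint

variable {ι W : Type*} [Fintype ι] [AddCommGroup W] [Module ℝ W]

def cubeSlice (f : ι → W) (S : Set ι) (t : ι → ℝ) : Set (ι → ℝ) :=
  {u | (∀ q, u q ∈ Set.Icc 0 1) ∧ (∀ q ∉ S, u q = t q) ∧ ∑ q, u q • f q = ∑ q, t q • f q}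

theorem isCompact_cubeSlice (f : ι → W) (S : Set ι) (t : ι → ℝ) :
    IsCompact (cubeSlice f S t) := by
  have hker : {u : ι → ℝ | ∑ q, u q • f q = ∑ q, t q • f q} =
      (· - t) ⁻¹' (LinearMap.ker (Fintype.linearCombination ℝ f) : Set (ι → ℝ)) := by
    ext u
    simp [Fintype.linearCombination_apply, sub_smul, sum_sub_distrib, sub_eq_zero]
  refine (isCompact_univ_pi fun _ => isCompact_Icc).of_isClosed_subset ?_ fun u hu q _ => hu.1 q
  simp only [cubeSlice, Set.ofPred_and, Set.ofPred_forall, hker]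
  refine (isClosed_iInter fun q => isClosed_Icc.preimage (continuous_apply q)).inter
    ((isClosed_iInter fun q => isClosed_iInter fun _ =>
      isClosed_eq (continuous_apply q) continuous_const).inter ?_)
  exact (Submodule.closed_of_finiteDimensional _).preimage (continuous_id.sub continuous_const)

theorem linearIndepOn_of_mem_extremePoints_cubeSlice {f : ι → W} {S : Set ι} {t u : ι → ℝ}
    (hu : u ∈ (cubeSlice f S t).extremePoints ℝ) :
    LinearIndepOn ℝ f {q | q ∈ S ∧ u q ∈ Set.Ioo 0 1} := by
  classical
  refine linearIndepOn_iff_linearIndepOn_finset.2 fun s hs =>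
    linearIndepOn_finset_iff.2 fun g hg q₀ hq₀ => ?_
  -- a dependency `g` among the fractional columns is a direction in which `u` moves both ways
  set G : ι → ℝ := fun q => if q ∈ s then g q else 0
  have hmem : ∀ ε : ℝ, (∀ q ∈ s, u q + ε * g q ∈ Set.Ioo 0 1) →
      u + ε • G ∈ cubeSlice f S t := by
    intro ε hε
    refine ⟨fun q => ?_, fun q hq => ?_, ?_⟩
    · by_cases hqs : q ∈ s
      · simpa [G, hqs] using Set.Ioo_subset_Icc_self (hε q hqs)
      · simpa [G, hqs] using hu.1.1 q
    · have hqs : q ∉ s := fun h => hq (hs h).1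
      simpa [G, hqs] using hu.1.2.1 q hq
    · simp only [Pi.add_apply, Pi.smul_apply, smul_eq_mul, add_smul, sum_add_distrib, G, mul_ite,
        mul_zero, ite_smul, zero_smul, sum_ite_mem, univ_inter, mul_smul, ← smul_sum, hg,
        smul_zero, add_zero]
      exact hu.1.2.2
  have hsmall : ∀ᶠ ε in 𝓝 (0 : ℝ), ∀ q ∈ s, u q + ε * g q ∈ Set.Ioo 0 1 :=
    (eventually_all_finset s).2 fun q hq =>
      (Continuous.tendsto' (by fun_prop) 0 (u q) (by simp)).eventually
        (isOpen_Ioo.mem_nhds (hs hq).2)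
  obtain ⟨ε, ⟨hεpos, hεneg⟩, hε₀⟩ :=
    (((hsmall.and ((continuous_neg.tendsto' 0 0 neg_zero).eventually hsmall)).filter_mono
      nhdsWithin_le_nhds).and (self_mem_nhdsWithin (s := {0}ᶜ))).exists
  have hseg : u ∈ openSegment ℝ (u + ε • G) (u + (-ε) • G) := by
    simpa [neg_smul, ← sub_eq_add_neg] using mem_openSegment_add_sub (𝕜 := ℝ) u (ε • G)
  have hG : ε • G = 0 := by
    simpa using (mem_extremePoints.1 hu).2 _ (hmem ε hεpos) _ (hmem (-ε) hεneg) hseg |>.1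
  simpa [G, hq₀] using congrFun ((smul_eq_zero.1 hG).resolve_left hε₀) q₀

theorem exists_linearIndepOn_fractional (f : ι → W) (S : Set ι) (t : ι → ℝ)
    (ht : ∀ q, t q ∈ Set.Icc 0 1) :
    ∃ u : ι → ℝ, (∀ q, u q ∈ Set.Icc 0 1) ∧ (∀ q ∉ S, u q = t q) ∧
      ∑ q, u q • f q = ∑ q, t q • f q ∧ LinearIndepOn ℝ f {q | q ∈ S ∧ u q ∈ Set.Ioo 0 1} := by
  obtain ⟨u, hu⟩ := (isCompact_cubeSlice f S t).extremePoints_nonempty ⟨t, ht, fun _ _ => rfl, rfl⟩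
  exact ⟨u, hu.1.1, hu.1.2.1, hu.1.2.2, linearIndepOn_of_mem_extremePoints_cubeSlice hu⟩

end ExtremePoint

section Counting

variable {κ : Type*} [Fintype κ]

theorem exists_ne_mem_Ioo_of_sum_eq_natCast {u : κ → ℝ} {N : ℕ}
    (hu : ∀ j, u j ∈ Set.Icc 0 1) (hsum : ∑ j, u j = N) {j₀ : κ} (hj₀ : u j₀ ∈ Set.Ioo 0 1) :
    ∃ j ≠ j₀, u j ∈ Set.Ioo 0 1 := by
  classical
  by_contra! hint
  have hrest : ∑ j ∈ univ.erase j₀, u j = #{j ∈ univ.erase j₀ | u j = 1} := by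
    rw [card_filter, Nat.cast_sum]
    refine sum_congr rfl fun j hj => ?_
    rcases eq_zero_or_eq_one_of_notMem_Ioo (hu j) (hint j (ne_of_mem_erase hj)) with h | h <;>
      simp [h]
  rw [← add_sum_erase _ _ (mem_univ j₀), hrest] at hsum
  obtain ⟨h0, h1⟩ := hj₀
  set c := #{j ∈ univ.erase j₀ | u j = 1}
  have hlt : c < N := by exact_mod_cast (show (c : ℝ) < N by linarith)
  have : (c : ℝ) + 1 ≤ N := by exact_mod_cast hlt
  linarith

theorem exists_finset_card_eq_of_sum_eq_natCast [DecidableEq κ] {u : κ → ℝ} {N : ℕ}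
    (hu : ∀ j, u j ∈ Set.Icc 0 1) (hsum : ∑ j, u j = N) :
    ∃ I : Finset κ, #I = N ∧ ∀ j, u j ∉ Set.Ioo 0 1 → (if j ∈ I then 1 else 0) = u j := by
  classical
  have hones : (#{j | u j = 1} : ℝ) ≤ N := by
    rw [← hsum, card_filter, Nat.cast_sum]
    exact sum_le_sum fun j _ => by split_ifs with h <;> simp [h, (hu j).1]
  have hpos : (N : ℝ) ≤ #{j | 0 < u j} := by
    rw [← hsum, card_filter, Nat.cast_sum]
    refine sum_le_sum fun j _ => ?_
    split_ifs with h
    · simpa using (hu j).2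
    · simpa using not_lt.1 h
  obtain ⟨I, hsub, hsup, hcard⟩ := exists_subsuperset_card_eq
    (s := {j | u j = 1}) (t := {j | 0 < u j}) (fun j => by simp +contextual)
    (by exact_mod_cast hones) (by exact_mod_cast hpos)
  refine ⟨I, hcard, fun j hj => ?_⟩
  rcases eq_zero_or_eq_one_of_notMem_Ioo (hu j) hj with h | h
  · have hjI : j ∉ I := fun hjI => by simpa [h] using hsup hjI
    simp [hjI, h]
  · have hjI : j ∈ I := hsub (by simpa using h)
    simp [hjI, h]

end Counting

section Rows

variable {ρ κ V : Type*} [DecidableEq ρ]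

def rowAugment (v : ρ × κ → V) (q : ρ × κ) : (ρ → ℝ) × V := (Pi.single q.1 1, v q)

theorem fst_sum_smul_rowAugment [Fintype ρ] [Fintype κ] [AddCommGroup V] [Module ℝ V]
    (v : ρ × κ → V) (t : ρ × κ → ℝ) (i : ρ) :
    (∑ q, t q • rowAugment v q).1 i = ∑ j, t (i, j) := by
  simp [rowAugment, Prod.fst_sum, Finset.sum_apply, Pi.single_apply, Fintype.sum_prod_type]

theorem card_le_two_mul_finrank [AddCommGroup V] [Module ℝ V] [FiniteDimensional ℝ V]
    (v : ρ × κ → V) (F : Finset (ρ × κ)) (hF : LinearIndepOn ℝ (rowAugment v) (F : Set (ρ × κ)))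
    (hpair : ∀ q ∈ F, ∃ q' ∈ F, q' ≠ q ∧ q'.1 = q.1) :
    #F ≤ 2 * finrank ℝ V := by
  set R := F.image Prod.fst
  have hrows : 2 * #R ≤ #F := by
    rw [card_eq_sum_card_fiberwise (f := Prod.fst) (t := R) fun q hq => mem_image_of_mem _ hq,
      mul_comm, ← smul_eq_mul, ← sum_const]
    refine sum_le_sum fun r hr => ?_
    obtain ⟨q, hq, rfl⟩ := mem_image.1 hr
    obtain ⟨q', hq', hne, hrow⟩ := hpair q hq
    exact one_lt_card.2 ⟨q', by simp [hq', hrow], q, by simp [hq], hne⟩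
  -- dropping the rows that `F` does not meet keeps the columns independent
  let w : ρ × κ → (R → ℝ) × V := fun q => (fun r => (Pi.single q.1 1 : ρ → ℝ) r, v q)
  have hw : LinearIndepOn ℝ w (F : Set (ρ × κ)) := by
    refine linearIndepOn_finset_iff.2 fun g hg => linearIndepOn_finset_iff.1 hF g ?_
    have hg₁ := congrArg Prod.fst hg
    have hg₂ := congrArg Prod.snd hg
    simp only [w, Prod.fst_sum, Prod.snd_sum, Prod.smul_fst, Prod.smul_snd, Prod.fst_zero,
      Prod.snd_zero] at hg₁ hg₂
    refine Prod.ext (funext fun r => ?_) (by simpa [rowAugment, Prod.snd_sum] using hg₂)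
    by_cases hr : r ∈ R
    · simpa [rowAugment, Prod.fst_sum, Finset.sum_apply] using congrFun hg₁ ⟨r, hr⟩
    · simp only [rowAugment, Prod.fst_sum, Prod.smul_fst, Finset.sum_apply, Pi.smul_apply,
        Prod.fst_zero, Pi.zero_apply]
      refine sum_eq_zero fun q hq => ?_
      have : q.1 ≠ r := fun h => hr (h ▸ mem_image_of_mem _ hq)
      simp [this.symm]
  have hdim : #F ≤ #R + finrank ℝ V := by
    simpa [finrank_prod] using hw.fintype_card_le_finrank
  omega

end Rows

section Rounding

variable {ρ κ : Type*} [DecidableEq κ]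

def selectionIndicator (I : ρ → Finset κ) (q : ρ × κ) : ℝ :=
  if q.2 ∈ I q.1 then 1 else 0

theorem selectionIndicator_mem_Icc (I : ρ → Finset κ) (q : ρ × κ) :
    selectionIndicator I q ∈ Set.Icc 0 1 := by
  unfold selectionIndicator
  split_ifs <;> simp

def IsRoundingOf (I : ρ → Finset κ) (t : ρ × κ → ℝ) : Prop :=
  ∀ q, t q ∉ Set.Ioo 0 1 → selectionIndicator I q = t q

theorem exists_isRoundingOf [Fintype κ] {t : ρ × κ → ℝ} (ht : ∀ q, t q ∈ Set.Icc 0 1)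
    (N : ρ → ℕ) (hN : ∀ i, ∑ j, t (i, j) = N i) :
    ∃ I : ρ → Finset κ, (∀ i, #(I i) = N i) ∧ IsRoundingOf I t := by
  choose I hcard hI using fun i =>
    exists_finset_card_eq_of_sum_eq_natCast (fun j => ht (i, j)) (hN i)
  exact ⟨I, hcard, fun q hq => by simpa [selectionIndicator] using hI q.1 q.2 hq⟩

end Rounding

section Online

variable {n : ℕ} {κ V : Type*} [Fintype κ]

open Classical in
noncomputable def fractionalPrefix (K : ℕ) (t : Fin n × κ → ℝ) : Finset (Fin n × κ) :=
  {q | (q.1 : ℕ) < K ∧ t q ∈ Set.Ioo 0 1}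

theorem mem_fractionalPrefix {K : ℕ} {t : Fin n × κ → ℝ} {q : Fin n × κ} :
    q ∈ fractionalPrefix K t ↔ (q.1 : ℕ) < K ∧ t q ∈ Set.Ioo 0 1 := by
  simp [fractionalPrefix]

variable [NormedAddCommGroup V] [NormedSpace ℝ V]

structure IsOnlineState (v : Fin n × κ → V) (t₀ : Fin n × κ → ℝ) (K : ℕ) (t : Fin n × κ → ℝ) :
    Prop where
  mem_Icc : ∀ q, t q ∈ Set.Icc 0 1
  eq_of_le : ∀ q, K ≤ (q.1 : ℕ) → t q = t₀ q
  sum_smul_eq : ∑ q, t q • rowAugment v q = ∑ q, t₀ q • rowAugment v q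
  card_fractionalPrefix_le : #(fractionalPrefix K t) ≤ 2 * finrank ℝ V

namespace IsOnlineState

variable {v : Fin n × κ → V} {t₀ t : Fin n × κ → ℝ} {K : ℕ}

theorem sum_row_eq (h : IsOnlineState v t₀ K t) (i : Fin n) :
    ∑ j, t (i, j) = ∑ j, t₀ (i, j) := by
  rw [← fst_sum_smul_rowAugment v, h.sum_smul_eq, fst_sum_smul_rowAugment]

theorem exists_succ [FiniteDimensional ℝ V] {N : Fin n → ℕ} (hN : ∀ i, ∑ j, t₀ (i, j) = N i)
    (h : IsOnlineState v t₀ K t) :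
    ∃ t', IsOnlineState v t₀ (K + 1) t' ∧ ∀ q, t q ∉ Set.Ioo 0 1 → t' q = t q := by
  obtain ⟨u, hu, hfix, hsum, hind⟩ := exists_linearIndepOn_fractional (rowAugment v)
    {q | (q.1 : ℕ) < K + 1 ∧ t q ∈ Set.Ioo 0 1} t h.mem_Icc
  have hkeep : ∀ q, t q ∉ Set.Ioo 0 1 → u q = t q := fun q hq => hfix q fun h' => hq h'.2
  have hrow : ∀ i, ∑ j, u (i, j) = N i := fun i => by
    rw [← hN i, ← fst_sum_smul_rowAugment v, hsum, h.sum_smul_eq, fst_sum_smul_rowAugment]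
  refine ⟨u, ⟨hu, fun q hq => ?_, hsum.trans h.sum_smul_eq, ?_⟩, hkeep⟩
  · rw [hfix q fun h' => absurd h'.1 (by omega), h.eq_of_le q (by omega)]
  refine card_le_two_mul_finrank v _ (hind.mono fun q hq => ?_) fun q hq => ?_
  · obtain ⟨hqK, hqu⟩ := mem_fractionalPrefix.1 hq
    by_cases htq : t q ∈ Set.Ioo 0 1
    · exact ⟨⟨hqK, htq⟩, hqu⟩
    · exact absurd (hkeep q htq ▸ hqu) htq
  · obtain ⟨hqK, hqu⟩ := mem_fractionalPrefix.1 hq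
    obtain ⟨j, hj, hju⟩ :=
      exists_ne_mem_Ioo_of_sum_eq_natCast (fun j => hu (q.1, j)) (hrow q.1) hqu
    exact ⟨(q.1, j), mem_fractionalPrefix.2 ⟨hqK, hju⟩, fun h' => hj (congrArg Prod.snd h'), rfl⟩

theorem norm_sum_sub_smul_le [DecidableEq κ] (hv : ∀ q, ‖v q‖ ≤ 1) {k : Fin n}
    (h : IsOnlineState v t₀ (k + 1) t) {I : Fin n → Finset κ} (hI : IsRoundingOf I t) :
    ‖∑ q ∈ Iic k ×ˢ univ, (selectionIndicator I q - t₀ q) • v q‖ ≤ 2 * finrank ℝ V := by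
  have hprefix : ∀ q : Fin n × κ, q ∈ (Iic k ×ˢ univ : Finset (Fin n × κ)) ↔ (q.1 : ℕ) < k + 1 :=
    fun q => by
      simp only [mem_product, mem_Iic, mem_univ, and_true, Fin.le_def]
      omega
  have hbalanced : ∑ q ∈ Iic k ×ˢ univ, (t q - t₀ q) • v q = 0 := by
    rw [sum_subset (Finset.subset_univ _) fun q _ hq => ?_]
    · simpa [rowAugment, Prod.snd_sum, sub_smul, sum_sub_distrib, sub_eq_zero] using
        congrArg Prod.snd h.sum_smul_eq
    · rw [h.eq_of_le q (by rw [hprefix] at hq; omega), sub_self, zero_smul]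
  have hterm : ∀ q, ‖(selectionIndicator I q - t q) • v q‖ ≤ 1 := fun q => by
    obtain ⟨ha₀, ha₁⟩ := selectionIndicator_mem_Icc I q
    obtain ⟨hb₀, hb₁⟩ := h.mem_Icc q
    rw [norm_smul, Real.norm_eq_abs]
    exact mul_le_one₀ (abs_sub_le_iff.2 ⟨by linarith, by linarith⟩) (norm_nonneg _) (hv q)
  calc ‖∑ q ∈ Iic k ×ˢ univ, (selectionIndicator I q - t₀ q) • v q‖
      = ‖∑ q ∈ Iic k ×ˢ univ, (selectionIndicator I q - t q) • v q‖ := by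
        rw [← add_zero (∑ q ∈ Iic k ×ˢ univ, (selectionIndicator I q - t q) • v q), ← hbalanced,
          ← sum_add_distrib]
        simp_rw [← add_smul, sub_add_sub_cancel]
    _ = ‖∑ q ∈ fractionalPrefix (k + 1) t, (selectionIndicator I q - t q) • v q‖ := by
        rw [sum_subset (fun q hq => (hprefix q).2 (mem_fractionalPrefix.1 hq).1) fun q hq hq' => ?_]
        rw [hI q fun htq => hq' (mem_fractionalPrefix.2 ⟨(hprefix q).1 hq, htq⟩), sub_self,
          zero_smul]
    _ ≤ ∑ q ∈ fractionalPrefix (k + 1) t, (1 : ℝ) := norm_sum_le_of_le _ fun q _ => hterm q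
    _ ≤ 2 * finrank ℝ V := by simpa using (Nat.cast_le (α := ℝ)).2 h.card_fractionalPrefix_le

end IsOnlineState

theorem exists_isOnlineState [DecidableEq κ] [FiniteDimensional ℝ V] {v : Fin n × κ → V}
    (hv : ∀ q, ‖v q‖ ≤ 1) {t₀ : Fin n × κ → ℝ} (ht₀ : ∀ q, t₀ q ∈ Set.Icc 0 1) {N : Fin n → ℕ}
    (hN : ∀ i, ∑ j, t₀ (i, j) = N i) (K : ℕ) :
    ∃ t, IsOnlineState v t₀ K t ∧ ∀ I, IsRoundingOf I t → ∀ k : Fin n, (k : ℕ) < K →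
      ‖∑ q ∈ Iic k ×ˢ univ, (selectionIndicator I q - t₀ q) • v q‖ ≤ 2 * finrank ℝ V := by
  induction K with
  | zero =>
    exact ⟨t₀, ⟨ht₀, fun _ _ => rfl, rfl, by simp [fractionalPrefix]⟩,
      fun _ _ _ hk => absurd hk (Nat.not_lt_zero _)⟩
  | succ K ih =>
    obtain ⟨t, ht, hprev⟩ := ih
    obtain ⟨t', ht', hkeep⟩ := ht.exists_succ hN
    refine ⟨t', ht', fun I hI k hk => ?_⟩
    rcases (Nat.lt_succ_iff.1 hk).lt_or_eq with hk | hk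
    · exact hprev I (fun q hq => (hI q (hkeep q hq ▸ hq)).trans (hkeep q hq)) k hk
    · subst hk
      exact ht'.norm_sum_sub_smul_le hv hI

theorem exists_rounding_norm_prefix_sum_le [DecidableEq κ] [FiniteDimensional ℝ V]
    {v : Fin n × κ → V} (hv : ∀ q, ‖v q‖ ≤ 1) {t₀ : Fin n × κ → ℝ}
    (ht₀ : ∀ q, t₀ q ∈ Set.Icc 0 1) (N : Fin n → ℕ) (hN : ∀ i, ∑ j, t₀ (i, j) = N i) :
    ∃ I : Fin n → Finset κ, (∀ i, #(I i) = N i) ∧ ∀ k : Fin n,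
      ‖∑ q ∈ Iic k ×ˢ univ, (selectionIndicator I q - t₀ q) • v q‖ ≤ 2 * finrank ℝ V := by
  obtain ⟨t, ht, hprefix⟩ := exists_isOnlineState hv ht₀ hN n
  obtain ⟨I, hcard, hI⟩ := exists_isRoundingOf ht.mem_Icc N fun i => (ht.sum_row_eq i).trans (hN i)
  exact ⟨I, hcard, fun k => hprefix I hI k k.isLt⟩

end Online

theorem splitting_lemma_general (V : Type*) [NormedAddCommGroup V] [NormedSpace ℝ V]
    [FiniteDimensional ℝ V]
    (n m p : ℕ) (hpm : p ≤ m)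
    (v : Fin n → Fin m → V)
    (hbd : ∀ i j, ‖v i j‖ ≤ 1)
    (x : Fin n → V)
    (hx : ∀ k : Fin n, x k = (1 / (m : ℝ)) • ∑ i ∈ Finset.Iic k, ∑ j, v i j) :
    ∃ I : Fin n → Finset (Fin m),
      (∀ k, (I k).card = p) ∧
      ∀ k : Fin n, ‖(∑ i ∈ Finset.Iic k, ∑ j ∈ I i, v i j) - (p : ℝ) • x k‖ ≤
        8 * (Module.finrank ℝ V : ℝ) ^ 2 := by
  have hfrac : (p : ℝ) / m ∈ Set.Icc 0 1 :=
    ⟨by positivity, div_le_one_of_le₀ (by exact_mod_cast hpm) (Nat.cast_nonneg m)⟩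
  have hrow : ∑ _j : Fin m, (p : ℝ) / m = p := by
    rcases Nat.eq_zero_or_pos m with rfl | hm
    · simp [Nat.le_zero.1 hpm]
    · simp [mul_div_cancel₀ _ (Nat.cast_ne_zero.2 hm.ne' : (m : ℝ) ≠ 0)]
  obtain ⟨I, hcard, hI⟩ := exists_rounding_norm_prefix_sum_le (v := fun q => v q.1 q.2)
    (fun q => hbd q.1 q.2) (fun _ => hfrac) (fun _ => p) fun _ => hrow
  refine ⟨I, hcard, fun k => ?_⟩
  have herr : (∑ i ∈ Iic k, ∑ j ∈ I i, v i j) - (p : ℝ) • x k =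
      ∑ q ∈ Iic k ×ˢ univ, (selectionIndicator I q - p / m) • v q.1 q.2 := by
    simp [hx k, sum_product, selectionIndicator, sub_smul, sum_sub_distrib, smul_sum, smul_smul,
      div_eq_mul_inv]
  rw [herr]
  refine (hI k).trans ?_
  have : (2 * finrank ℝ V : ℕ) ≤ 8 * finrank ℝ V ^ 2 := by nlinarith
  exact_mod_cast this

theorem splitting_lemma (V : Type*) [NormedAddCommGroup V] [NormedSpace ℝ V]
    [FiniteDimensional ℝ V]
    (n m p : ℕ) (hp1 : 1 ≤ p) (hpm : p ≤ m)
    (v : Fin n → Fin m → V)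
    (hbd : ∀ i j, ‖v i j‖ ≤ 1)
    (x : Fin n → V)
    (hx : ∀ k : Fin n, x k = (1 / (m : ℝ)) • ∑ i ∈ Finset.Iic k, ∑ j, v i j) :
    ∃ I : Fin n → Finset (Fin m),
      (∀ k, (I k).card = p) ∧
      ∀ k : Fin n, ‖(∑ i ∈ Finset.Iic k, ∑ j ∈ I i, v i j) - (p : ℝ) • x k‖ ≤
        8 * (Module.finrank ℝ V : ℝ) ^ 2 :=
  splitting_lemma_general V n m p hpm v hbd x hx
end

section
/- Let $V$ be a $d$-dimensional real normed space, let $v_{i,j}\in V$ ($1\le i\le n$, $1\le j\le m$) satisfy $\|v_{i,j}\|\le 1$, and set $x_k=\frac{1}{m}\sum_{i=1}^k\sum_{j=1}^m v_{i,j}$. Then there exist permutations $\pi_1,\dots,\pi_n$ of $\{1,\dots,m\}$ such that $\|\sum_{i=1}^k v_{i,\pi_i(j)} - x_k\| \le \frac{8d^2}{\log 1.5}$ for all $k=1,\dots,n$ and $j=1,\dots,m$. -/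
/-!
Split the columns in halves, recursively. For vectors `u i j` of norm at most `N`, a halving step
chooses in every row `i` a set `T i` of `a = ⌊m / 2⌋` columns such that every prefix sum over the
rows of `∑ j ∈ T i, u i j - (a / m) • ∑ j, u i j` has norm at most `2 d N`. Start from the point
with all weights `a / m` and, for `K = 1, …, n`, move inside the polytope cut out by the row sums
and by the weighted vector sum until the coordinates of rows `< K` that are still fractional have
linearly independent augmented vectors `(e i, u i j)`; a row containing one contains two, so there
are at most `2 d` of them. Coordinates that have become `0` or `1` are never moved again, so the
final rounding differs from the point of stage `K` in at most `2 d` coordinates of rows `< K`,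
while that point balances those rows exactly. Recursing into `T i` and its complement and
concatenating the two orders costs `2 d N / s` at a level with `s ≤ 2 m / 3` columns, and these
costs add up to at most `6 d N ≤ 8 d² / log 1.5`.
-/

open Finset

section Rounding

variable {ι W : Type*} [Fintype ι] [AddCommGroup W] [Module ℝ W]

theorem exists_add_mul_mem_Icc_notMem_Ioo (l w : ι → ℝ)
    (hw : ∀ c, w c ≠ 0 → l c ∈ Set.Ioo 0 1) (hw₀ : w ≠ 0) :
    ∃ t : ℝ, (∀ c, w c ≠ 0 → l c + t * w c ∈ Set.Icc 0 1) ∧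
      ∃ c, w c ≠ 0 ∧ l c + t * w c ∉ Set.Ioo 0 1 := by
  classical
  -- the time at which `l c + t * w c` reaches the boundary of `[0, 1]`
  let exit c := if 0 < w c then (1 - l c) / w c else l c / -w c
  have hexit_pos : ∀ c, w c ≠ 0 → 0 ≤ exit c := by
    intro c hc
    obtain ⟨h0, h1⟩ := hw c hc
    rcases hc.lt_or_gt with hneg | hpos
    · simp only [exit, if_neg hneg.not_gt]; exact div_nonneg h0.le (by linarith)
    · simp only [exit, if_pos hpos]; exact div_nonneg (by linarith) hpos.le
  have hexit : ∀ c, w c ≠ 0 →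
      (0 < w c ∧ exit c * w c = 1 - l c) ∨ (w c < 0 ∧ exit c * w c = -l c) := by
    intro c hc
    rcases hc.lt_or_gt with hneg | hpos
    · right; simp only [exit, if_neg hneg.not_gt]; exact ⟨hneg, by field_simp⟩
    · left; simp only [exit, if_pos hpos]; exact ⟨hpos, by field_simp⟩
  obtain ⟨c₀, hc₀⟩ : ∃ c, w c ≠ 0 := Function.ne_iff.mp hw₀
  obtain ⟨c₁, hc₁, hmin⟩ :=
    exists_min_image {c | w c ≠ 0} exit ⟨c₀, mem_filter.mpr ⟨mem_univ _, hc₀⟩⟩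
  have hwc₁ : w c₁ ≠ 0 := (mem_filter.mp hc₁).2
  refine ⟨exit c₁, fun c hc => ?_, c₁, hwc₁, ?_⟩
  · have hle := hmin c (mem_filter.mpr ⟨mem_univ _, hc⟩)
    have h₁ := hexit_pos c₁ hwc₁
    obtain ⟨h0, h1⟩ := hw c hc
    rcases hexit c hc with ⟨hpos, he⟩ | ⟨hneg, he⟩
    · constructor <;> nlinarith
    · constructor <;> nlinarith
  · rcases hexit c₁ hwc₁ with ⟨-, he⟩ | ⟨-, he⟩ <;> simp [he]

theorem exists_linearIndepOn_fractional_s3 (φ : ι → W) (l : ι → ℝ) (F : Finset ι) :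
    ∃ l' : ι → ℝ, ∑ c, l' c • φ c = ∑ c, l c • φ c ∧
      (∀ c, l' c ≠ l c → c ∈ F ∧ l c ∈ Set.Ioo 0 1 ∧ l' c ∈ Set.Icc 0 1) ∧
      LinearIndepOn ℝ φ ({c ∈ F | l' c ∈ Set.Ioo 0 1} : Finset ι) := by
  classical
  let frac (l' : ι → ℝ) : Finset ι := {c ∈ F | l' c ∈ Set.Ioo 0 1}
  let admissible : Set (ι → ℝ) := {l' | ∑ c, l' c • φ c = ∑ c, l c • φ c ∧
      ∀ c, l' c ≠ l c → c ∈ F ∧ l c ∈ Set.Ioo 0 1 ∧ l' c ∈ Set.Icc 0 1}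
  -- a linear dependency among the fractional coordinates of a minimiser would let us move along
  -- it until one more of them becomes `0` or `1`
  obtain ⟨l', ⟨hsum, hchange⟩, hmin⟩ := (measure fun l' => #(frac l')).wf.has_min admissible
    ⟨l, rfl, fun c h => absurd rfl h⟩
  refine ⟨l', hsum, hchange, ?_⟩
  by_contra hdep
  obtain ⟨f, hf, c₀, hc₀, hfc₀⟩ := not_linearIndepOn_finset_iff.mp hdep
  let w c := if c ∈ frac l' then f c else 0
  have hw : ∀ c, w c ≠ 0 → c ∈ frac l' := fun c hc => by
    by_contra h; exact hc (if_neg h)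
  have hw₀ : w ≠ 0 :=
    Function.ne_iff.mpr ⟨c₀, by rwa [Pi.zero_apply, show w c₀ = f c₀ from if_pos hc₀]⟩
  obtain ⟨t, ht, c₁, hwc₁, hc₁⟩ :=
    exists_add_mul_mem_Icc_notMem_Ioo l' w (fun c hc => (mem_filter.mp (hw c hc)).2) hw₀
  let l'' c := l' c + t * w c
  have hmoved : ∀ c, l'' c ≠ l' c → w c ≠ 0 := fun c hc h0 => hc (by simp [l'', h0])
  refine hmin l'' ⟨?_, fun c hc => ?_⟩ ?_
  · have hw_sum : ∑ c, w c • φ c = 0 := by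
      simp only [w, ite_smul, zero_smul, sum_ite_mem, univ_inter]; exact hf
    simp only [l'', add_smul, mul_smul, sum_add_distrib, ← smul_sum, hw_sum, smul_zero,
      add_zero, hsum]
  · by_cases hc' : l'' c = l' c
    · rw [hc'] at hc ⊢; exact hchange c hc
    · have hwc := hmoved c hc'
      have hfrac := mem_filter.mp (hw c hwc)
      by_cases hl : l' c = l c
      · exact ⟨hfrac.1, hl ▸ hfrac.2, ht c hwc⟩
      · exact ⟨(hchange c hl).1, (hchange c hl).2.1, ht c hwc⟩
  · have hsub : frac l'' ⊆ frac l' := fun c hc => by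
      by_cases hc' : l'' c = l' c
      · simpa [frac, hc'] using hc
      · exact hw c (hmoved c hc')
    refine card_lt_card ((ssubset_iff_of_subset hsub).mpr ⟨c₁, hw c₁ hwc₁, fun h => ?_⟩)
    exact hc₁ (mem_filter.mp h).2

end Rounding

theorem card_le_two_mul_finrank_of_linearIndepOn {ι ρ V : Type*} [DecidableEq ρ]
    [AddCommGroup V] [Module ℝ V] [FiniteDimensional ℝ V] (r : ι → ρ) (u : ι → V)
    (F : Finset ι) (hF : LinearIndepOn ℝ (fun c => ((Pi.single (r c) 1 : ρ → ℝ), u c)) F)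
    (hrow : ∀ c ∈ F, ∃ c' ∈ F, c' ≠ c ∧ r c' = r c) :
    #F ≤ 2 * Module.finrank ℝ V := by
  classical
  let φ c : (ρ → ℝ) × V := (Pi.single (r c) 1, u c)
  let rowVecs : Finset ((ρ → ℝ) × V) := (F.image r).image fun i => (Pi.single i 1, 0)
  let S := Submodule.span ℝ (rowVecs : Set ((ρ → ℝ) × V)) ⊔
    LinearMap.range (LinearMap.inr ℝ (ρ → ℝ) V)
  have hspan : Submodule.span ℝ (Set.range fun c : F => φ c) ≤ S := by
    refine Submodule.span_le.mpr ?_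
    rintro _ ⟨c, rfl⟩
    have hsplit : φ c = (Pi.single (r c) 1, 0) + (0, u c) := by simp [φ]
    change φ c ∈ S
    rw [hsplit]
    refine add_mem (Submodule.mem_sup_left (Submodule.subset_span ?_))
      (Submodule.mem_sup_right ⟨u c, rfl⟩)
    exact mem_image_of_mem _ (mem_image_of_mem _ c.2)
  have hrank : #F ≤ #(F.image r) + Module.finrank ℝ V :=
    calc #F = Module.finrank ℝ (Submodule.span ℝ (Set.range fun c : F => φ c)) := by
          rw [finrank_span_eq_card (b := fun c : F => φ c) hF, Fintype.card_coe]
      _ ≤ Module.finrank ℝ S := Submodule.finrank_mono hspan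
      _ ≤ #rowVecs + Module.finrank ℝ V :=
          (Submodule.finrank_add_le_finrank_add_finrank _ _).trans
            (add_le_add (finrank_span_finset_le_card _) (LinearMap.finrank_range_le _))
      _ ≤ #(F.image r) + Module.finrank ℝ V := Nat.add_le_add_right card_image_le _
  have hrows : 2 * #(F.image r) ≤ #F := by
    refine mul_card_image_le_card F 2 fun i hi => ?_
    obtain ⟨c, hc, rfl⟩ := mem_image.mp hi
    obtain ⟨c', hc', hne, hrc⟩ := hrow c hc
    exact one_lt_card.mpr ⟨c', mem_filter.mpr ⟨hc', hrc⟩, c, mem_filter.mpr ⟨hc, rfl⟩, hne⟩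
  omega

theorem eq_zero_or_eq_one_of_mem_Icc_of_notMem_Ioo {x : ℝ} (h₁ : x ∈ Set.Icc 0 1)
    (h₂ : x ∉ Set.Ioo 0 1) : x = 0 ∨ x = 1 :=
  (Set.Icc_sdiff_Ioo_same zero_le_one).subset ⟨h₁, h₂⟩

section Row

variable {κ : Type*} [Fintype κ]

theorem exists_ne_mem_Ioo_of_sum_eq_intCast (l : κ → ℝ) (hl : ∀ j, l j ∈ Set.Icc 0 1) {z : ℤ}
    (hsum : ∑ j, l j = z) {j₀ : κ} (hj₀ : l j₀ ∈ Set.Ioo 0 1) :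
    ∃ j ≠ j₀, l j ∈ Set.Ioo 0 1 := by
  classical
  by_contra! hint
  have hfloor : ∀ j ∈ univ.erase j₀, l j = ⌊l j⌋ := fun j hj => by
    rcases eq_zero_or_eq_one_of_mem_Icc_of_notMem_Ioo (hl j) (hint j (ne_of_mem_erase hj))
      with h | h <;> simp [h]
  have hj₀int : l j₀ = ((z - ∑ j ∈ univ.erase j₀, ⌊l j⌋ : ℤ) : ℝ) := by
    rw [← add_sum_erase _ _ (mem_univ j₀), sum_congr rfl hfloor] at hsum
    push_cast
    linarith
  obtain ⟨h0, h1⟩ := hj₀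
  rw [hj₀int] at h0 h1
  have h0' := Int.cast_pos.mp h0
  have h1' : z - ∑ j ∈ univ.erase j₀, ⌊l j⌋ < 1 := by exact_mod_cast h1
  omega

theorem exists_finset_card_eq_of_sum_eq_natCast_s3 (l : κ → ℝ) (hl : ∀ j, l j ∈ Set.Icc 0 1)
    {a : ℕ} (hsum : ∑ j, l j = a) :
    ∃ T : Finset κ, #T = a ∧ ∀ j, l j ∉ Set.Ioo 0 1 → (j ∈ T ↔ l j = 1) := by
  classical
  let ones : Finset κ := {j | l j = 1}
  let pos : Finset κ := {j | 0 < l j}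
  have hsub : ones ⊆ pos := fun j hj => by simp_all [ones, pos]
  have hones : #ones ≤ a := by
    have : (#ones : ℝ) ≤ a := calc
      (#ones : ℝ) = ∑ j ∈ ones, l j := by
        rw [sum_congr rfl fun j hj => (mem_filter.mp hj).2, sum_const, nsmul_one]
      _ ≤ ∑ j, l j := sum_le_sum_of_subset_of_nonneg (subset_univ _) fun j _ _ => (hl j).1
      _ = a := hsum
    exact_mod_cast this
  have hpos : a ≤ #pos := by
    have : (a : ℝ) ≤ #pos := calc
      (a : ℝ) = ∑ j ∈ pos, l j := by
        rw [← hsum, sum_filter_of_ne fun j _ h => lt_of_le_of_ne (hl j).1 h.symm]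
      _ ≤ ∑ j ∈ pos, 1 := sum_le_sum fun j _ => (hl j).2
      _ = #pos := by simp
    exact_mod_cast this
  obtain ⟨T, hoT, hTp, hT⟩ := exists_subsuperset_card_eq hsub hones hpos
  refine ⟨T, hT, fun j hj => ?_⟩
  rcases eq_zero_or_eq_one_of_mem_Icc_of_notMem_Ioo (hl j) hj with h | h
  · exact ⟨fun hjT => by simpa [pos, h] using hTp hjT, fun h1 => by linarith⟩
  · exact ⟨fun _ => h, fun _ => hoT (by simp [ones, h])⟩

end Row

theorem norm_sum_smul_le_card_mul {ι V : Type*} [SeminormedAddCommGroup V] [NormedSpace ℝ V]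
    {s t : Finset ι} (hts : t ⊆ s) {r : ι → ℝ} {v : ι → V} {N : ℝ}
    (hr₀ : ∀ c ∈ s, c ∉ t → r c = 0) (hr : ∀ c ∈ t, |r c| ≤ 1) (hv : ∀ c ∈ t, ‖v c‖ ≤ N) :
    ‖∑ c ∈ s, r c • v c‖ ≤ #t * N :=
  calc ‖∑ c ∈ s, r c • v c‖ = ‖∑ c ∈ t, r c • v c‖ := by
        rw [sum_subset hts fun c hc hct => by rw [hr₀ c hc hct, zero_smul]]
    _ ≤ ∑ c ∈ t, ‖r c • v c‖ := norm_sum_le _ _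
    _ ≤ ∑ c ∈ t, N := sum_le_sum fun c hc => by
        rw [norm_smul, Real.norm_eq_abs]
        exact (mul_le_of_le_one_left (norm_nonneg _) (hr c hc)).trans (hv c hc)
    _ = #t * N := by rw [sum_const, nsmul_eq_mul]

namespace PrefixRounding

variable {V : Type*} [NormedAddCommGroup V] [NormedSpace ℝ V] {n : ℕ} {κ : Fin n → Type*}
  [∀ i, Fintype (κ i)]

def augment (u : (i : Fin n) → κ i → V) (c : Σ i, κ i) : (Fin n → ℝ) × V :=
  (Pi.single c.1 1, u c.1 c.2)

def rowsBelow (K : ℕ) : Finset (Σ i, κ i) :=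
  ({i | (i : ℕ) < K} : Finset (Fin n)).sigma fun _ => univ

theorem mem_rowsBelow {K : ℕ} {c : Σ i, κ i} : c ∈ rowsBelow K ↔ (c.1 : ℕ) < K := by
  simp [rowsBelow]

theorem rowsBelow_succ (k : Fin n) :
    rowsBelow (κ := κ) (k + 1 : ℕ) = (Iic k).sigma fun _ => univ := by
  ext ⟨i, j⟩
  simp only [mem_rowsBelow, mem_sigma, mem_Iic, mem_univ, and_true, Fin.le_def]
  omega

theorem sum_smul_augment (u : (i : Fin n) → κ i → V) (l : (Σ i, κ i) → ℝ) :
    ∑ c, l c • augment u c = (fun i => ∑ j, l ⟨i, j⟩, ∑ c, l c • u c.1 c.2) := by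
  ext i
  · simp [augment, Prod.fst_sum, Pi.single_apply, Fintype.sum_sigma]
  · simp [augment, Prod.snd_sum]

variable (u : (i : Fin n) → κ i → V) (δ : ℝ)

noncomputable def seq : ℕ → (Σ i, κ i) → ℝ
  | 0 => fun _ => δ
  | K + 1 => Classical.choose
      (exists_linearIndepOn_fractional_s3 (augment u) (seq K) (rowsBelow (K + 1)))

theorem seq_succ_spec (K : ℕ) :
    ∑ c, seq u δ (K + 1) c • augment u c = ∑ c, seq u δ K c • augment u c ∧
      (∀ c, seq u δ (K + 1) c ≠ seq u δ K c →
        c ∈ rowsBelow (K + 1) ∧ seq u δ K c ∈ Set.Ioo 0 1 ∧ seq u δ (K + 1) c ∈ Set.Icc 0 1) ∧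
      LinearIndepOn ℝ (augment u)
        ({c ∈ rowsBelow (K + 1) | seq u δ (K + 1) c ∈ Set.Ioo 0 1} : Finset _) :=
  Classical.choose_spec (exists_linearIndepOn_fractional_s3 _ _ _)

theorem sum_smul_augment_seq (K : ℕ) :
    ∑ c, seq u δ K c • augment u c = ∑ c, δ • augment u c := by
  induction K with
  | zero => rfl
  | succ K ih => exact (seq_succ_spec u δ K).1.trans ih

theorem seq_mem_Icc (hδ : δ ∈ Set.Icc 0 1) (K : ℕ) (c : Σ i, κ i) :
    seq u δ K c ∈ Set.Icc 0 1 := by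
  induction K with
  | zero => exact hδ
  | succ K ih =>
    by_cases h : seq u δ (K + 1) c = seq u δ K c
    · exact h ▸ ih
    · exact ((seq_succ_spec u δ K).2.1 c h).2.2

theorem seq_of_le {K : ℕ} {c : Σ i, κ i} (hc : K ≤ c.1) : seq u δ K c = δ := by
  induction K with
  | zero => rfl
  | succ K ih =>
    by_contra h
    have := mem_rowsBelow.mp ((seq_succ_spec u δ K).2.1 c (by rwa [ih (by omega)])).1
    omega

theorem seq_eq_of_notMem_Ioo {K K' : ℕ} (hKK' : K ≤ K') {c : Σ i, κ i}
    (hc : seq u δ K c ∉ Set.Ioo 0 1) : seq u δ K' c = seq u δ K c := by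
  induction K', hKK' using Nat.le_induction with
  | base => rfl
  | succ K' _ ih =>
    by_contra h
    exact hc (ih ▸ ((seq_succ_spec u δ K').2.1 c (by rwa [ih])).2.1)

theorem rowSum_seq {a : ℕ} (hrow : ∀ i, (Fintype.card (κ i) : ℝ) * δ = a) (K : ℕ) (i : Fin n) :
    ∑ j, seq u δ K ⟨i, j⟩ = a := by
  have := congrFun (congrArg Prod.fst (sum_smul_augment_seq u δ K)) i
  simp only [sum_smul_augment] at this
  rw [this, sum_const, card_univ, nsmul_eq_mul, hrow]

theorem sum_rowsBelow_seq_sub_smul (K : ℕ) :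
    ∑ c ∈ rowsBelow K, (seq u δ K c - δ) • u c.1 c.2 = 0 := by
  rw [sum_subset (subset_univ _) fun c _ hc => by
    rw [seq_of_le u δ (not_lt.mp (mt mem_rowsBelow.mpr hc)), sub_self, zero_smul]]
  have := congrArg Prod.snd (sum_smul_augment_seq u δ K)
  simp only [sum_smul_augment] at this
  simp only [sub_smul, sum_sub_distrib, this, sub_self]

theorem card_fractional_seq_le [FiniteDimensional ℝ V] (hδ : δ ∈ Set.Icc 0 1) {a : ℕ}
    (hrow : ∀ i, (Fintype.card (κ i) : ℝ) * δ = a) (K : ℕ) :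
    #{c ∈ rowsBelow K | seq u δ K c ∈ Set.Ioo 0 1} ≤ 2 * Module.finrank ℝ V := by
  cases K with
  | zero =>
    rw [filter_eq_empty_iff.mpr fun c hc => absurd (mem_rowsBelow.mp hc) (Nat.not_lt_zero _)]
    simp
  | succ K =>
    refine card_le_two_mul_finrank_of_linearIndepOn Sigma.fst (fun c => u c.1 c.2) _
      (seq_succ_spec u δ K).2.2 fun ⟨i, j₀⟩ hc => ?_
    obtain ⟨hiK, hfrac⟩ := mem_filter.mp hc
    obtain ⟨j, hj, hjfrac⟩ := exists_ne_mem_Ioo_of_sum_eq_intCast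
      (fun j => seq u δ (K + 1) ⟨i, j⟩) (fun j => seq_mem_Icc u δ hδ _ _) (z := a)
      (by simpa using rowSum_seq u δ hrow _ i) hfrac
    have hi : (i : ℕ) < K + 1 := mem_rowsBelow.mp hiK
    refine ⟨⟨i, j⟩, mem_filter.mpr ⟨mem_rowsBelow.mpr hi, hjfrac⟩, ?_, rfl⟩
    exact fun h => hj (eq_of_heq (Sigma.mk.inj_iff.mp h).2)

theorem norm_sum_rowsBelow_sub_smul_le [FiniteDimensional ℝ V] (hδ : δ ∈ Set.Icc 0 1) {a : ℕ}
    (hrow : ∀ i, (Fintype.card (κ i) : ℝ) * δ = a) {N : ℝ} (hN : 0 ≤ N)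
    (hu : ∀ i j, ‖u i j‖ ≤ N) (r : (Σ i, κ i) → ℝ) (hr : ∀ c, r c ∈ Set.Icc 0 1)
    (hr_seq : ∀ c, seq u δ n c ∉ Set.Ioo 0 1 → r c = seq u δ n c) {K : ℕ} (hK : K ≤ n) :
    ‖∑ c ∈ rowsBelow K, (r c - δ) • u c.1 c.2‖ ≤ 2 * Module.finrank ℝ V * N := by
  have hsupport : ∀ c, seq u δ K c ∉ Set.Ioo 0 1 → r c = seq u δ K c := fun c hc => by
    have hn := seq_eq_of_notMem_Ioo u δ hK hc
    rw [← hn] at hc ⊢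
    exact hr_seq c hc
  calc ‖∑ c ∈ rowsBelow K, (r c - δ) • u c.1 c.2‖
      = ‖∑ c ∈ rowsBelow K, (r c - seq u δ K c) • u c.1 c.2 +
          ∑ c ∈ rowsBelow K, (seq u δ K c - δ) • u c.1 c.2‖ := by
        rw [← sum_add_distrib]
        simp_rw [← add_smul, sub_add_sub_cancel]
    _ ≤ #{c ∈ rowsBelow K | seq u δ K c ∈ Set.Ioo 0 1} * N := by
        rw [sum_rowsBelow_seq_sub_smul, add_zero]
        refine norm_sum_smul_le_card_mul (filter_subset _ _)
          (fun c hc hct => sub_eq_zero.mpr (hsupport c fun h => hct (mem_filter.mpr ⟨hc, h⟩)))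
          (fun c _ => ?_) (fun c _ => hu c.1 c.2)
        have h₁ := seq_mem_Icc u δ hδ K c
        exact abs_sub_le_iff.mpr ⟨by linarith [h₁.1, (hr c).2], by linarith [h₁.2, (hr c).1]⟩
    _ ≤ 2 * Module.finrank ℝ V * N :=
        mul_le_mul_of_nonneg_right (by exact_mod_cast card_fractional_seq_le u δ hδ hrow K) hN

end PrefixRounding

open PrefixRounding in
theorem exists_finset_norm_prefix_sum_sub_le {V : Type*} [NormedAddCommGroup V] [NormedSpace ℝ V]
    [FiniteDimensional ℝ V] {n : ℕ} {κ : Fin n → Type*} [∀ i, Fintype (κ i)] {M a : ℕ}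
    (hM : 0 < M) (hκ : ∀ i, Fintype.card (κ i) = M) (ha : a ≤ M) (u : (i : Fin n) → κ i → V)
    {N : ℝ} (hu : ∀ i j, ‖u i j‖ ≤ N) :
    ∃ T : (i : Fin n) → Finset (κ i), (∀ i, #(T i) = a) ∧ ∀ k : Fin n,
      ‖∑ i ∈ Iic k, (∑ j ∈ T i, u i j - ((a : ℝ) / M) • ∑ j, u i j)‖ ≤
        2 * Module.finrank ℝ V * N := by
  classical
  set δ : ℝ := a / M
  have hM' : (0 : ℝ) < M := Nat.cast_pos.mpr hM
  have hδ : δ ∈ Set.Icc 0 1 :=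
    ⟨by positivity, div_le_one_of_le₀ (Nat.cast_le.mpr ha) hM'.le⟩
  have hrow : ∀ i, (Fintype.card (κ i) : ℝ) * δ = a := fun i => by
    rw [hκ, mul_div_cancel₀ _ hM'.ne']
  choose T hT hTL using fun i => exists_finset_card_eq_of_sum_eq_natCast_s3
    (fun j => seq u δ n ⟨i, j⟩) (fun j => seq_mem_Icc u δ hδ _ _) (rowSum_seq u δ hrow n i)
  let rounded (c : Σ i, κ i) : ℝ := if c.2 ∈ T c.1 then 1 else 0
  have hrounded : ∀ c, seq u δ n c ∉ Set.Ioo 0 1 → rounded c = seq u δ n c := by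
    rintro ⟨i, j⟩ hc
    rcases eq_zero_or_eq_one_of_mem_Icc_of_notMem_Ioo (seq_mem_Icc u δ hδ n _) hc with h | h <;>
      simp [rounded, hTL i j hc, h]
  refine ⟨T, hT, fun k => ?_⟩
  have hN : 0 ≤ N := by
    obtain ⟨j⟩ : Nonempty (κ k) := Fintype.card_pos_iff.mp (hκ k ▸ hM)
    exact (norm_nonneg _).trans (hu k j)
  have hprefix : ∑ i ∈ Iic k, (∑ j ∈ T i, u i j - δ • ∑ j, u i j) =
      ∑ c ∈ rowsBelow (k + 1 : ℕ), (rounded c - δ) • u c.1 c.2 := by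
    rw [rowsBelow_succ, sum_sigma]
    refine sum_congr rfl fun i _ => ?_
    simp [rounded, sub_smul, ite_smul, sum_ite_mem, smul_sum]
  rw [hprefix]
  refine norm_sum_rowsBelow_sub_smul_le u δ hδ hrow hN hu rounded (fun c => ?_) hrounded k.isLt
  by_cases h : c.2 ∈ T c.1 <;> simp [rounded, h]

theorem norm_sub_inv_smul_le_of_split {V : Type*} [SeminormedAddCommGroup V] [NormedSpace ℝ V]
    {X Y Z : V} {D : ℝ} {s M : ℕ} (hs : 0 < s) (h3s : 3 * s ≤ 2 * M) (hD : 0 ≤ D)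
    (hX : ‖X - (s : ℝ)⁻¹ • Z‖ ≤ 3 * D * (1 - 1 / s)) (hZ : ‖Z - ((s : ℝ) / M) • Y‖ ≤ D) :
    ‖X - (M : ℝ)⁻¹ • Y‖ ≤ 3 * D * (1 - 1 / M) := by
  have hs' : (0 : ℝ) < s := Nat.cast_pos.mpr hs
  have hM' : (0 : ℝ) < M := Nat.cast_pos.mpr (by omega)
  calc ‖X - (M : ℝ)⁻¹ • Y‖ = ‖(X - (s : ℝ)⁻¹ • Z) + (s : ℝ)⁻¹ • (Z - ((s : ℝ) / M) • Y)‖ := by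
        rw [smul_sub, smul_smul, show (s : ℝ)⁻¹ * (s / M) = (M : ℝ)⁻¹ by field_simp,
          sub_add_sub_cancel]
    _ ≤ ‖X - (s : ℝ)⁻¹ • Z‖ + (s : ℝ)⁻¹ * ‖Z - ((s : ℝ) / M) • Y‖ := by
        refine (norm_add_le _ _).trans_eq ?_
        rw [norm_smul, Real.norm_of_nonneg (inv_nonneg.mpr hs'.le)]
    _ ≤ 3 * D * (1 - 1 / s) + (s : ℝ)⁻¹ * D := by gcongr
    _ ≤ 3 * D * (1 - 1 / M) := by
        have h3s' : (3 : ℝ) * s ≤ 2 * M := by exact_mod_cast h3s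
        have key : 3 / (M : ℝ) ≤ 2 / s := by
          rw [div_le_div_iff₀ hM' hs']; linarith
        calc 3 * D * (1 - 1 / s) + (s : ℝ)⁻¹ * D = D * (3 - 2 / s) := by field_simp; ring
          _ ≤ D * (3 - 3 / M) := by gcongr
          _ = 3 * D * (1 - 1 / M) := by ring

theorem norm_sub_sub_smul_eq_of_le {V : Type*} [SeminormedAddCommGroup V] [Module ℝ V]
    (Y Z : V) {a M : ℕ} (ha : a ≤ M) (hM : 0 < M) :
    ‖Y - Z - (((M - a : ℕ) : ℝ) / M) • Y‖ = ‖Z - ((a : ℝ) / M) • Y‖ := by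
  rw [Nat.cast_sub ha, sub_div, div_self (by positivity), sub_smul, one_smul, ← norm_neg]
  congr 1
  abel

theorem exists_equiv_norm_prefix_sum_sub_average_le {V : Type*} [NormedAddCommGroup V]
    [NormedSpace ℝ V] [FiniteDimensional ℝ V] {n : ℕ} {κ : Fin n → Type*} [∀ i, Fintype (κ i)]
    (M : ℕ) (hκ : ∀ i, Fintype.card (κ i) = M) (y : (i : Fin n) → κ i → V) {N : ℝ}
    (hy : ∀ i j, ‖y i j‖ ≤ N) :
    ∃ e : (i : Fin n) → Fin M ≃ κ i, ∀ (k : Fin n) (j : Fin M),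
      ‖∑ i ∈ Iic k, y i (e i j) - (M : ℝ)⁻¹ • ∑ i ∈ Iic k, ∑ c, y i c‖ ≤
        3 * (2 * Module.finrank ℝ V * N) * (1 - 1 / M) := by
  classical
  induction M using Nat.strong_induction_on generalizing κ with
  | _ M ih =>
  rcases Nat.lt_or_ge M 2 with hM | hM
  · refine ⟨fun i => (Fintype.equivFinOfCardEq (hκ i)).symm, fun k j => ?_⟩
    obtain rfl : M = 1 := by have := j.pos; omega
    have hrow : ∀ i, ∑ c, y i c = y i ((Fintype.equivFinOfCardEq (hκ i)).symm j) := fun i => by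
      rw [← (Fintype.equivFinOfCardEq (hκ i)).symm.sum_comp, Fin.sum_univ_one,
        Fin.fin_one_eq_zero j]
    simp [hrow]
  obtain ⟨T, hTcard, hT⟩ := exists_finset_norm_prefix_sum_sub_le (a := M / 2) (by omega) hκ
    (Nat.div_le_self _ _) y hy
  obtain ⟨eA, heA⟩ := ih (M / 2) (by omega) (κ := fun i => {c // c ∈ T i})
    (fun i => by rw [Fintype.card_coe, hTcard]) (fun i c => y i c) (fun i c => hy i c)
  obtain ⟨eB, heB⟩ := ih (M - M / 2) (by omega) (κ := fun i => {c // c ∉ T i})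
    (fun i => by rw [Fintype.card_subtype_compl, Fintype.card_coe, hκ, hTcard])
    (fun i c => y i c) (fun i c => hy i c)
  let split : Fin M ≃ Fin (M / 2) ⊕ Fin (M - M / 2) :=
    (finCongr (by omega)).trans finSumFinEquiv.symm
  refine ⟨fun i => split.trans ((Equiv.sumCongr (eA i) (eB i)).trans (Equiv.sumCompl _)),
    fun k j => ?_⟩
  have hD : 0 ≤ 2 * (Module.finrank ℝ V : ℝ) * N := by
    have : 0 ≤ N := (norm_nonneg _).trans (hy k ((Fintype.equivFinOfCardEq (hκ k)).symm j))
    positivity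
  set Y := ∑ i ∈ Iic k, ∑ c, y i c
  set Z := ∑ i ∈ Iic k, ∑ c ∈ T i, y i c
  have hZ : ‖Z - ((M / 2 : ℕ) / (M : ℝ)) • Y‖ ≤ 2 * Module.finrank ℝ V * N := by
    simpa only [Z, Y, sum_sub_distrib, smul_sum] using hT k
  rcases hj : split j with p | q
  · simp only [Equiv.trans_apply, hj, Equiv.sumCongr_apply, Sum.map_inl, Equiv.sumCompl_apply_inl]
    refine norm_sub_inv_smul_le_of_split (by omega) (by omega) hD ?_ hZ
    simpa only [Z, sum_coe_sort] using heA k p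
  · simp only [Equiv.trans_apply, hj, Equiv.sumCongr_apply, Sum.map_inr, Equiv.sumCompl_apply_inr]
    refine norm_sub_inv_smul_le_of_split (s := M - M / 2) (Z := Y - Z) (by omega) (by omega) hD
      ?_ ?_
    · have hcompl : ∀ i, ∑ c : {c // c ∉ T i}, y i c = ∑ c, y i c - ∑ c ∈ T i, y i c := fun i => by
        rw [← sum_subtype (T i)ᶜ (fun _ => mem_compl), eq_sub_iff_add_eq, sum_compl_add_sum]
      simpa only [Y, Z, hcompl, sum_sub_distrib] using heB k q
    · rwa [norm_sub_sub_smul_eq_of_le Y Z (Nat.div_le_self _ _) (by omega)]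

theorem multidim_kwapien (V : Type*) [NormedAddCommGroup V] [NormedSpace ℝ V]
    [FiniteDimensional ℝ V]
    (n m : ℕ)
    (v : Fin n → Fin m → V)
    (hbd : ∀ i j, ‖v i j‖ ≤ 1)
    (x : Fin n → V)
    (hx : ∀ k : Fin n, x k = (1 / (m : ℝ)) • ∑ i ∈ Finset.Iic k, ∑ j, v i j) :
    ∃ π : Fin n → Equiv.Perm (Fin m),
      ∀ (k : Fin n) (j : Fin m),
        ‖(∑ i ∈ Finset.Iic k, v i ((π i) j)) - x k‖ ≤
          8 * (Module.finrank ℝ V : ℝ) ^ 2 / Real.log 1.5 := by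
  obtain ⟨π, hπ⟩ :=
    exists_equiv_norm_prefix_sum_sub_average_le m (fun _ => Fintype.card_fin m) v hbd
  refine ⟨π, fun k j => ?_⟩
  rw [hx k, one_div]
  refine (hπ k j).trans ?_
  have hd : (Module.finrank ℝ V : ℝ) ≤ (Module.finrank ℝ V : ℝ) ^ 2 := by
    exact_mod_cast Nat.le_self_pow two_ne_zero _
  have hlog_pos : 0 < Real.log 1.5 := Real.log_pos (by norm_num)
  have hlog : Real.log 1.5 ≤ 1 / 2 := by
    linarith [Real.log_le_sub_one_of_pos (by norm_num : (0 : ℝ) < 1.5)]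
  calc 3 * (2 * (Module.finrank ℝ V : ℝ) * 1) * (1 - 1 / m)
      ≤ 6 * (Module.finrank ℝ V : ℝ) ^ 2 := by
        have : 0 ≤ (Module.finrank ℝ V : ℝ) * (1 / m) := by positivity
        nlinarith
    _ ≤ 8 * (Module.finrank ℝ V : ℝ) ^ 2 / Real.log 1.5 := by
        rw [le_div_iff₀ hlog_pos]
        nlinarith [sq_nonneg (Module.finrank ℝ V : ℝ)]
end

section
/- Let $\{\xi_i\}_{i\in I}\subset\mathbb{R}^d$ with $I$ at most countable, $0<\|\xi_i\|\le 1$ (Euclidean norm), and let $\{\alpha_i\}_{i\in I}$ be strictly positive reals with $\sum_i\alpha_i\le 1$ and $\sum_i\alpha_i\xi_i=0$. Then there exist indices $i_1,\dots,i_m\in I$ with $1\le m\le d+1$ and scalars $0<\beta_k\le\alpha_{i_k}$ such that $\sum_{k=1}^m\beta_k\xi_{i_k}=0$. -/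
/-!
The partial sums of `∑ αᵢ ξᵢ`, normalised by `∑ αᵢ` over the same finite set, are points of the
convex hull `C` of the `ξᵢ` tending to `0`, so `0 ∈ closure C`. Inside the span of the `ξᵢ` the set
`C` has nonempty interior, and if `0` were not an interior point, a separating functional `f` would
be `≤ 0` on `C`; then `∑ αᵢ f(ξᵢ) = 0` is a sum of nonpositive terms, so `f` vanishes on every `ξᵢ`,
hence on the whole span, which is absurd. Thus `0 ∈ C`, and Carathéodory's theorem writes `0` as a
convex combination of at most `d + 1` of the `ξᵢ`; multiplying its weights by `min αᵢₖ` gives the `βₖ`.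
-/

open Finset Filter Module Set Submodule

section

variable {E ι : Type*} [NormedAddCommGroup E] [NormedSpace ℝ E]

theorem zero_mem_closure_convexHull_of_hasSum {ξ : ι → E} {α : ι → ℝ} (hα : ∀ i, 0 ≤ α i)
    {i₀ : ι} (hi₀ : 0 < α i₀) (hzero : HasSum (fun i => α i • ξ i) 0) :
    (0 : E) ∈ closure (convexHull ℝ (range ξ)) := by
  have hlarge : ∀ᶠ F : Finset ι in atTop, α i₀ ≤ ∑ i ∈ F, α i :=
    (eventually_ge_atTop {i₀}).mono fun F hF =>
      single_le_sum (fun i _ => hα i) (hF (mem_singleton_self i₀))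
  have hbdd : IsBoundedUnder (· ≤ ·) atTop (norm ∘ fun F : Finset ι => (∑ i ∈ F, α i)⁻¹) := by
    refine ⟨(α i₀)⁻¹, eventually_map.2 <| hlarge.mono fun F hF => ?_⟩
    rw [Function.comp_apply, Real.norm_of_nonneg (inv_nonneg.2 (hi₀.le.trans hF))]
    exact inv_anti₀ hi₀ hF
  refine mem_closure_of_tendsto (hbdd.smul_tendsto_zero hzero) ?_
  filter_upwards [hlarge] with F hF
  exact F.centerMass_mem_convexHull (fun i _ => hα i) (hi₀.trans_le hF) fun i _ => mem_range_self i

variable [FiniteDimensional ℝ E]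

theorem zero_mem_interior_convexHull_of_hasSum [Nonempty ι] {ξ : ι → E} {α : ι → ℝ}
    (hα : ∀ i, 0 < α i) (hspan : span ℝ (range ξ) = ⊤) (hzero : HasSum (fun i => α i • ξ i) 0) :
    (0 : E) ∈ interior (convexHull ℝ (range ξ)) := by
  set C := convexHull ℝ (range ξ)
  have hC : Convex ℝ C := convex_convexHull ℝ _
  have hcl : (0 : E) ∈ closure C :=
    zero_mem_closure_convexHull_of_hasSum (fun i => (hα i).le) (hα (Classical.arbitrary ι)) hzero
  have haff : affineSpan ℝ C = ⊤ := by
    have h0 : (0 : E) ∈ affineSpan ℝ (range ξ) := by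
      rw [← affineSpan_convexHull]
      exact closure_minimal (subset_affineSpan ℝ C) (AffineSubspace.closed_of_finiteDimensional _) hcl
    rw [affineSpan_convexHull, ← affineSpan_insert_eq_affineSpan ℝ h0]
    apply SetLike.coe_injective
    simp [affineSpan_insert_zero, hspan]
  obtain ⟨x₀, hx₀⟩ := hC.interior_nonempty_iff_affineSpan_eq_top.2 haff
  by_contra h0
  obtain ⟨f, hf⟩ := geometric_hahn_banach_open_point hC.interior isOpen_interior h0
  have hfξ : ∀ i, 0 ≤ -(α i * f (ξ i)) := by
    have hclosure : closure (interior C) ⊆ {x | f x ≤ 0} :=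
      closure_minimal (fun x hx => by simpa using (hf x hx).le)
        (isClosed_le f.continuous continuous_const)
    rw [hC.closure_interior_eq_closure_of_nonempty_interior ⟨x₀, hx₀⟩] at hclosure
    exact fun i => neg_nonneg.2 <| mul_nonpos_of_nonneg_of_nonpos (hα i).le <|
      hclosure (subset_closure (subset_convexHull ℝ _ (mem_range_self i)))
  have hker : ∀ i, f (ξ i) = 0 := by
    have hsum : HasSum (fun i => -(α i * f (ξ i))) 0 := by simpa using (hzero.mapL f).neg
    intro i
    simpa [(hα i).ne'] using congr_fun ((hasSum_zero_iff_of_nonneg hfξ).1 hsum) i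
  have hfx₀ : f x₀ = 0 := LinearMap.congr_fun (LinearMap.ext_on_range hspan hker (g := 0)) x₀
  simpa [hfx₀] using hf x₀ hx₀

theorem zero_mem_convexHull_of_hasSum [Nonempty ι] {ξ : ι → E} {α : ι → ℝ}
    (hα : ∀ i, 0 < α i) (hzero : HasSum (fun i => α i • ξ i) 0) :
    (0 : E) ∈ convexHull ℝ (range ξ) := by
  set W := span ℝ (range ξ)
  let ξW : ι → W := fun i => ⟨ξ i, subset_span (mem_range_self i)⟩
  have hspan : span ℝ (range ξW) = ⊤ := by
    convert span_span_coe_preimage (R := ℝ) (s := range ξ)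
    ext x
    simp [ξW, Subtype.ext_iff]
  have hzeroW : HasSum (fun i => α i • ξW i) 0 :=
    (Topology.IsInducing.subtypeVal.hasSum_iff (g := W.subtype) _ _).1 hzero
  have hmem := mem_image_of_mem W.subtype
    (interior_subset (zero_mem_interior_convexHull_of_hasSum hα hspan hzeroW))
  rwa [LinearMap.image_convexHull, ← range_comp] at hmem

theorem exists_fin_pos_convex_combination_of_mem_convexHull {s : Set E} {x : E}
    (hx : x ∈ convexHull ℝ s) :
    ∃ (m : ℕ) (z : Fin m → E) (w : Fin m → ℝ), m ≤ finrank ℝ E + 1 ∧ range z ⊆ s ∧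
      (∀ k, 0 < w k) ∧ ∑ k, w k = 1 ∧ ∑ k, w k • z k = x := by
  obtain ⟨κ, _, z, w, hzs, hind, hw0, hw1, hwz⟩ := eq_pos_convex_span_of_mem_convexHull hx
  let e := (Fintype.equivFin κ).symm
  refine ⟨Fintype.card κ, z ∘ e, w ∘ e, ?_, ?_, fun k => hw0 _, ?_, ?_⟩
  · exact hind.card_le_finrank_succ.trans (by gcongr; exact Submodule.finrank_le _)
  · rwa [e.surjective.range_comp]
  · rwa [← e.sum_comp w] at hw1
  · rwa [← e.sum_comp (fun i => w i • z i)] at hwz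

theorem exists_pos_combination_le_eq_zero_of_zero_mem_convexHull {ξ : ι → E} {α : ι → ℝ}
    (hα : ∀ i, 0 < α i) (h : (0 : E) ∈ convexHull ℝ (range ξ)) :
    ∃ (m : ℕ) (idx : Fin m → ι) (β : Fin m → ℝ), 1 ≤ m ∧ m ≤ finrank ℝ E + 1 ∧
      (∀ k, 0 < β k ∧ β k ≤ α (idx k)) ∧ ∑ k, β k • ξ (idx k) = 0 := by
  obtain ⟨m, z, w, hm, hz, hw0, hw1, hwz⟩ := exists_fin_pos_convex_combination_of_mem_convexHull h
  choose idx hidx using fun k => hz (mem_range_self k)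
  have hm1 : 1 ≤ m := Nat.one_le_iff_ne_zero.2 (by rintro rfl; simp at hw1)
  have : Nonempty (Fin m) := ⟨⟨0, hm1⟩⟩
  obtain ⟨k₀, hk₀⟩ := Finite.exists_min (α ∘ idx)
  refine ⟨m, idx, fun k => α (idx k₀) * w k, hm1, hm, fun k => ⟨mul_pos (hα _) (hw0 k), ?_⟩, ?_⟩
  · have hwk : w k ≤ 1 := hw1 ▸ single_le_sum (fun i _ => (hw0 i).le) (mem_univ k)
    exact (mul_le_of_le_one_right (hα _).le hwk).trans (hk₀ k)
  · simp_rw [hidx, mul_smul, ← smul_sum, hwz, smul_zero]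

end

theorem caratheodory_positive_combination_general {d : ℕ}
    {I : Type*} [Nonempty I]
    (ξ : I → EuclideanSpace ℝ (Fin d)) (α : I → ℝ)
    (hα : ∀ i, 0 < α i)
    (hzero : HasSum (fun i => α i • ξ i) 0) :
    ∃ (m : ℕ) (idx : Fin m → I) (β : Fin m → ℝ),
      1 ≤ m ∧ m ≤ d + 1 ∧
      (∀ k, 0 < β k ∧ β k ≤ α (idx k)) ∧
      ∑ k, β k • ξ (idx k) = 0 := by
  simpa using exists_pos_combination_le_eq_zero_of_zero_mem_convexHull hα
    (zero_mem_convexHull_of_hasSum hα hzero)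

theorem caratheodory_positive_combination {d : ℕ} (hd : 0 < d)
    {I : Type*} [Countable I] [Nonempty I]
    (ξ : I → EuclideanSpace ℝ (Fin d)) (α : I → ℝ)
    (hξ0 : ∀ i, 0 < ‖ξ i‖) (hξ1 : ∀ i, ‖ξ i‖ ≤ 1)
    (hα : ∀ i, 0 < α i) (hαsum : Summable α) (hα1 : ∑' i, α i ≤ 1)
    (hzero : HasSum (fun i => α i • ξ i) 0) :
    ∃ (m : ℕ) (idx : Fin m → I) (β : Fin m → ℝ),
      1 ≤ m ∧ m ≤ d + 1 ∧
      (∀ k, 0 < β k ∧ β k ≤ α (idx k)) ∧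
      ∑ k, β k • ξ (idx k) = 0 :=
  caratheodory_positive_combination_general ξ α hα hzero
end

section
/- Let $D\subseteq[0,1]$ have positive Lebesgue measure and let $f\in L_1(D;\mathbb{R}^d)$ satisfy $\int_D f\,d\lambda=0$. Then there exist constants $\alpha,\beta_{\min},\beta_{\max},\tau>0$ such that for every non-zero $v\in\mathrm{Span}(\sigma(f))$ one has $\lambda\big(\{t\in D: \tfrac{(v,f(t))}{\|v\|\,\|f(t)\|}>\alpha\}\cap\{t: \beta_{\min}<\|f(t)\|<\beta_{\max}\}\big)>\tau$. -/
/-!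
If `⟪v, r⟫ ≤ 0` on the essential range of `f`, then `⟪v, f⟫ ≤ 0` a.e.; having integral zero, it
vanishes a.e., so the essential range and its span lie in `v⟂`, which excludes `v ≠ 0` from the
span. Hence some `r` in the essential range has `⟪v, r⟫ > 0`. By continuity of the angle, all `v'`
near `v` make an angle bounded away from `π / 2` with every `w` near `r`, and `f` lands near `r` on
a set of positive measure. Compactness of the unit sphere of the span makes the constants uniform.
-/

open MeasureTheory Filter Topology InnerProductGeometry RealInnerProductSpace

/-- The essential range of `f` with respect to the measure `μ`. -/
def essRange {E : Type*} [TopologicalSpace E] (μ : Measure ℝ) (f : ℝ → E) : Set E :=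
  {r | ∀ U ∈ nhds r, 0 < μ (f ⁻¹' U)}

section Topological

variable {E : Type*} [TopologicalSpace E]

theorem ae_mem_essRange [SecondCountableTopology E] (μ : Measure ℝ) (f : ℝ → E) :
    ∀ᵐ t ∂μ, f t ∈ essRange μ f := by
  set S : Set (Set E) := {U | IsOpen U ∧ μ (f ⁻¹' U) = 0}
  obtain ⟨T, hTc, hTS, hTU⟩ := TopologicalSpace.isOpen_sUnion_countable S fun U hU => hU.1
  have hnull : μ (f ⁻¹' ⋃₀ S) = 0 := by
    rw [← hTU, Set.preimage_sUnion, measure_biUnion_null_iff hTc]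
    exact fun U hU => (hTS hU).2
  refine measure_mono_null (fun t ht => ?_) hnull
  have hnot : ¬ ∀ U ∈ 𝓝 (f t), 0 < μ (f ⁻¹' U) := ht
  push Not at hnot
  obtain ⟨U, hU, hU0⟩ := hnot
  obtain ⟨V, hVU, hVo, htV⟩ := mem_nhds_iff.1 hU
  exact ⟨V, ⟨hVo, measure_mono_null (Set.preimage_mono hVU) (nonpos_iff_eq_zero.1 hU0)⟩, htV⟩

theorem essRange_subset_of_ae_mem {μ : Measure ℝ} {f : ℝ → E} {C : Set E} (hC : IsClosed C)
    (h : ∀ᵐ t ∂μ, f t ∈ C) : essRange μ f ⊆ C := by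
  intro r hr
  by_contra hrC
  exact (hr Cᶜ (hC.isOpen_compl.mem_nhds hrC)).ne' (ae_iff.1 h)

end Topological

section InnerProduct

variable {E : Type*} [NormedAddCommGroup E] [InnerProductSpace ℝ E]

def alignedSet (f : ℝ → E) (v : E) (α βmin βmax : ℝ) : Set ℝ :=
  {t | α < ⟪v, f t⟫ / (‖v‖ * ‖f t‖)} ∩ {t | βmin < ‖f t‖ ∧ ‖f t‖ < βmax}

theorem alignedSet_smul_left (f : ℝ → E) (v : E) {c : ℝ} (hc : 0 < c) (α βmin βmax : ℝ) :
    alignedSet f (c • v) α βmin βmax = alignedSet f v α βmin βmax := by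
  simp only [alignedSet, ← cos_angle, angle_smul_left_of_pos _ _ hc]

theorem exists_mem_essRange_inner_pos [CompleteSpace E] [SecondCountableTopology E]
    {μ : Measure ℝ} {f : ℝ → E} (hf : Integrable f μ) (hmean : ∫ t, f t ∂μ = 0) {v : E}
    (hv : v ∈ Submodule.span ℝ (essRange μ f)) (hv0 : v ≠ 0) :
    ∃ r ∈ essRange μ f, 0 < ⟪v, r⟫ := by
  by_contra! hnonpos
  have hneg : 0 ≤ᵐ[μ] fun t => -⟪v, f t⟫ :=
    (ae_mem_essRange μ f).mono fun t ht => neg_nonneg.2 (hnonpos _ ht)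
  have hzero : ∀ᵐ t ∂μ, f t ∈ (ℝ ∙ v)ᗮ := by
    have hint : ∫ t, -⟪v, f t⟫ ∂μ = 0 := by
      rw [integral_neg, integral_inner hf, hmean, inner_zero_right, neg_zero]
    filter_upwards [(integral_eq_zero_iff_of_nonneg_ae hneg (hf.const_inner v).neg).1 hint]
      with t ht
    simpa [Submodule.mem_orthogonal_singleton_iff_inner_right] using ht
  have hspan : Submodule.span ℝ (essRange μ f) ≤ (ℝ ∙ v)ᗮ :=
    Submodule.span_le.2 (essRange_subset_of_ae_mem (Submodule.isClosed_orthogonal _) hzero)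
  exact hv0 (inner_self_eq_zero.1
    (Submodule.mem_orthogonal_singleton_iff_inner_right.1 (hspan hv)))

/-- A single small `ε` serves as all four constants; stating the bound near `(0, u)` is what lets
`IsCompact.eventually_forall_of_forall_eventually` make it uniform in `u`. -/
theorem eventually_ofReal_lt_measure_alignedSet {μ : Measure ℝ} {f : ℝ → E} {u r : E}
    (hr : r ∈ essRange μ f) (hur : 0 < ⟪u, r⟫) :
    ∀ᶠ z : ℝ × E in 𝓝 (0, u),
      0 < z.1 → ENNReal.ofReal z.1 < μ (alignedSet f z.2 z.1 z.1 z.1⁻¹) := by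
  have hu : u ≠ 0 := by rintro rfl; simp at hur
  have hr0 : r ≠ 0 := by rintro rfl; simp at hur
  have hr' : 0 < ‖r‖ := norm_pos_iff.2 hr0
  have hc : 0 < Real.cos (angle u r) := by
    rw [cos_angle]
    exact div_pos hur (mul_pos (norm_pos_iff.2 hu) hr')
  have hcont : ∀ᶠ p : E × E in 𝓝 (u, r), Real.cos (angle u r) / 2 < Real.cos (angle p.1 p.2) :=
    (Real.continuous_cos.continuousAt.comp (continuousAt_angle (x := (u, r)) hu hr0)).eventually
      (eventually_gt_nhds (half_lt_self hc))
  rw [nhds_prod_eq, eventually_prod_iff] at hcont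
  obtain ⟨pU, hU, pV, hV, hUV⟩ := hcont
  have hnorm : ∀ᶠ w in 𝓝 r, ‖r‖ / 2 < ‖w‖ ∧ ‖w‖ < 2 * ‖r‖ :=
    continuous_norm.continuousAt.eventually
      ((eventually_gt_nhds (half_lt_self hr')).and
        (eventually_lt_nhds (by linarith [hr'])))
  have hpos := hr _ (hV.and hnorm)
  obtain ⟨τ, -, hτ0, hτ⟩ := ENNReal.lt_iff_exists_real_btwn.1 hpos
  have hτpos : 0 < τ := ENNReal.ofReal_pos.1 hτ0
  have hsmall : ∀ᶠ ε in 𝓝 (0 : ℝ),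
      ε < Real.cos (angle u r) / 2 ∧ ε < ‖r‖ / 2 ∧ ε < (2 * ‖r‖)⁻¹ ∧ ε < τ :=
    (eventually_lt_nhds (by positivity)).and <| (eventually_lt_nhds (by positivity)).and <|
      (eventually_lt_nhds (by positivity)).and (eventually_lt_nhds hτpos)
  rw [nhds_prod_eq]
  filter_upwards [hsmall.prod_mk hU] with ⟨ε, v'⟩ ⟨⟨hεc, hεr, hεr', hετ⟩, hv'⟩ hε
  have hsub : f ⁻¹' {w | pV w ∧ ‖r‖ / 2 < ‖w‖ ∧ ‖w‖ < 2 * ‖r‖} ⊆ alignedSet f v' ε ε ε⁻¹ := by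
    rintro t ⟨htV, hlow, hup⟩
    refine ⟨?_, by linarith, hup.trans ((lt_inv_comm₀ hε (mul_pos two_pos hr')).1 hεr')⟩
    rw [Set.mem_ofPred_eq, ← cos_angle]
    exact hεc.trans (hUV hv' htV)
  calc ENNReal.ofReal ε < ENNReal.ofReal τ := (ENNReal.ofReal_lt_ofReal_iff hτpos).2 hετ
    _ < _ := hτ
    _ ≤ _ := measure_mono hsub

theorem exists_pos_forall_ofReal_lt_measure_alignedSet [FiniteDimensional ℝ E]
    {μ : Measure ℝ} {f : ℝ → E} (hf : Integrable f μ) (hmean : ∫ t, f t ∂μ = 0) :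
    ∃ ε > 0, ∀ v ∈ Submodule.span ℝ (essRange μ f), v ≠ 0 →
      ENNReal.ofReal ε < μ (alignedSet f v ε ε ε⁻¹) := by
  set K : Set E := (Submodule.span ℝ (essRange μ f) : Set E) ∩ Metric.sphere 0 1
  have hK : IsCompact K :=
    (isCompact_sphere 0 1).inter_left (Submodule.closed_of_finiteDimensional _)
  have hlocal : ∀ u ∈ K, ∀ᶠ z : ℝ × E in 𝓝 (0, u),
      0 < z.1 → ENNReal.ofReal z.1 < μ (alignedSet f z.2 z.1 z.1 z.1⁻¹) := by
    rintro u ⟨hu, hu1⟩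
    have hu0 : u ≠ 0 := ne_zero_of_mem_unit_sphere ⟨u, hu1⟩
    obtain ⟨r, hr, hur⟩ := exists_mem_essRange_inner_pos hf hmean hu hu0
    exact eventually_ofReal_lt_measure_alignedSet hr hur
  have huniform : ∀ᶠ ε in 𝓝 (0 : ℝ), ∀ v ∈ K,
      0 < ε → ENNReal.ofReal ε < μ (alignedSet f v ε ε ε⁻¹) :=
    hK.eventually_forall_of_forall_eventually hlocal
  obtain ⟨ε, hε, hεpos⟩ :=
    ((huniform.filter_mono nhdsWithin_le_nhds).and (self_mem_nhdsWithin (s := Set.Ioi 0))).exists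
  refine ⟨ε, hεpos, fun v hv hv0 => ?_⟩
  have hvK : ‖v‖⁻¹ • v ∈ K :=
    ⟨Submodule.smul_mem _ _ hv, by simp [norm_smul, norm_ne_zero_iff.2 hv0]⟩
  rw [← alignedSet_smul_left f v (inv_pos.2 (norm_pos_iff.2 hv0))]
  exact hε _ hvK hεpos

end InnerProduct

theorem obtaining_positive_constants_general {d : ℕ}
    (D : Set ℝ)
    (f : ℝ → EuclideanSpace ℝ (Fin d))
    (hf : Integrable f (volume.restrict D))
    (hmean : ∫ x in D, f x = 0) :
    ∃ α βmin βmax τ : ℝ, 0 < α ∧ 0 < βmin ∧ 0 < βmax ∧ 0 < τ ∧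
      ∀ v ∈ Submodule.span ℝ (essRange (volume.restrict D) f), v ≠ 0 →
        ENNReal.ofReal τ <
          volume.restrict D
            ({t | α < (inner ℝ v (f t) : ℝ) / (‖v‖ * ‖f t‖)} ∩
              {t | βmin < ‖f t‖ ∧ ‖f t‖ < βmax}) := by
  obtain ⟨ε, hε, h⟩ := exists_pos_forall_ofReal_lt_measure_alignedSet hf hmean
  exact ⟨ε, ε, ε⁻¹, ε, hε, hε, inv_pos.2 hε, hε, h⟩

theorem obtaining_positive_constants {d : ℕ}
    (D : Set ℝ) (hD : MeasurableSet D) (hDpos : 0 < volume D) (hD1 : D ⊆ Set.Icc 0 1)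
    (f : ℝ → EuclideanSpace ℝ (Fin d))
    (hf : Integrable f (volume.restrict D))
    (hmean : ∫ x in D, f x = 0) :
    ∃ α βmin βmax τ : ℝ, 0 < α ∧ 0 < βmin ∧ 0 < βmax ∧ 0 < τ ∧
      ∀ v ∈ Submodule.span ℝ (essRange (volume.restrict D) f), v ≠ 0 →
        ENNReal.ofReal τ <
          volume.restrict D
            ({t | α < (inner ℝ v (f t) : ℝ) / (‖v‖ * ‖f t‖)} ∩
              {t | βmin < ‖f t‖ ∧ ‖f t‖ < βmax}) :=
  obtaining_positive_constants_general D f hf hmean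
end

section
/- Let $\{T_n\}$ be a sequence of mod-0 measure preserving automorphisms of $[0,1]$ such that $T_n\to T$ and $T_n^{-1}\to S$ in measure. Then $T$ and $S$ are mod-0 measure preserving automorphisms of $[0,1]$ and $S=T^{-1}$ almost everywhere. -/
/-!
Since `T n` preserves `μ` and `S n ∘ T n = id` a.e., the graph map `x ↦ (T n x, x)` has the same
law as `y ↦ (y, S n y)`. Convergence in measure implies convergence in distribution, so passing
to the limit the laws of `x ↦ (T x, x)` and `y ↦ (y, S y)` agree. Projecting onto the first factor
shows that `T` preserves `μ`, and since the second law is carried by the graph `{(y, S y)}`, so is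
the first, i.e. `S ∘ T = id` a.e. Exchanging the roles of `T` and `S` gives the rest.
-/

open MeasureTheory Filter

/-- Lebesgue measure restricted to the unit interval. -/
noncomputable def μ01 : Measure ℝ := volume.restrict (Set.Icc 0 1)

instance isProbabilityMeasure_μ01 : IsProbabilityMeasure μ01 :=
  ⟨by simp [μ01, Real.volume_Icc]⟩

namespace MeasureTheory

variable {α β ι : Type*} [MeasurableSpace α] {μ : Measure α}

section PseudoEMetricSpace

variable [PseudoEMetricSpace α] [PseudoEMetricSpace β] {l : Filter ι}
  {A : ι → α → β} {A' : α → β}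

theorem TendstoInMeasure.prodMk_id (h : TendstoInMeasure μ A l A') :
    TendstoInMeasure μ (fun i x => (A i x, x)) l (fun x => (A' x, x)) := by
  simpa [TendstoInMeasure, Prod.edist_eq] using h

theorem TendstoInMeasure.id_prodMk (h : TendstoInMeasure μ A l A') :
    TendstoInMeasure μ (fun i x => (x, A i x)) l (fun x => (x, A' x)) := by
  simpa [TendstoInMeasure, Prod.edist_eq] using h

end PseudoEMetricSpace

variable [MeasurableSpace β] {ν : Measure β}

theorem map_prodMk_id_eq_map_id_prodMk_of_leftInverse {A : α → β} {B : β → α}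
    (hA : MeasurePreserving A μ ν) (hB : Measurable B) (hinv : ∀ᵐ x ∂μ, B (A x) = x) :
    μ.map (fun x => (A x, x)) = ν.map (fun y => (y, B y)) :=
  calc μ.map (fun x => (A x, x)) = μ.map ((fun y => (y, B y)) ∘ A) :=
        Measure.map_congr (hinv.mono fun x hx => by simp [hx])
    _ = (μ.map A).map (fun y => (y, B y)) :=
        (Measure.map_map (measurable_id.prodMk hB) hA.measurable).symm
    _ = ν.map (fun y => (y, B y)) := by rw [hA.map_eq]

variable {F : α → β} {G : β → α}

theorem measurePreserving_of_map_prodMk_id_eq_map_id_prodMk (hF : Measurable F)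
    (hG : Measurable G) (h : μ.map (fun x => (F x, x)) = ν.map (fun y => (y, G y))) :
    MeasurePreserving F μ ν := by
  refine ⟨hF, ?_⟩
  calc μ.map F = (μ.map (fun x => (F x, x))).map Prod.fst :=
        (Measure.map_map measurable_fst (hF.prodMk measurable_id)).symm
    _ = (ν.map (fun y => (y, G y))).map Prod.fst := by rw [h]
    _ = ν := (Measure.map_map measurable_fst (measurable_id'.prodMk hG)).trans Measure.map_id

theorem ae_comp_eq_self_of_map_prodMk_id_eq_map_id_prodMk [MeasurableEq α] (hF : Measurable F)
    (hG : Measurable G) (h : μ.map (fun x => (F x, x)) = ν.map (fun y => (y, G y))) :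
    ∀ᵐ x ∂μ, G (F x) = x := by
  have hgraph : MeasurableSet {p : β × α | G p.1 = p.2} :=
    measurableSet_eq_fun (hG.comp measurable_fst) measurable_snd
  have hG_graph : ∀ᵐ p ∂ν.map (fun y => (y, G y)), G p.1 = p.2 :=
    (ae_map_iff (measurable_id.prodMk hG).aemeasurable hgraph).2 (ae_of_all _ fun _ => rfl)
  rw [← h] at hG_graph
  exact (ae_map_iff (hF.prodMk measurable_id).aemeasurable hgraph).1 hG_graph

theorem map_prodMk_id_eq_map_id_prodMk_of_tendstoInMeasure [PseudoEMetricSpace α]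
    [PseudoEMetricSpace β] [SecondCountableTopology α] [SecondCountableTopology β]
    [BorelSpace α] [BorelSpace β] [IsProbabilityMeasure μ] [IsProbabilityMeasure ν]
    {A : ℕ → α → β} {B : ℕ → β → α} {A' : α → β} {B' : β → α}
    (hA : ∀ n, MeasurePreserving (A n) μ ν) (hB : ∀ n, Measurable (B n))
    (hinv : ∀ n, ∀ᵐ x ∂μ, B n (A n x) = x)
    (hAc : TendstoInMeasure μ A atTop A') (hBc : TendstoInMeasure ν B atTop B') :
    μ.map (fun x => (A' x, x)) = ν.map (fun y => (y, B' y)) := by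
  have hAd := hAc.prodMk_id.tendstoInDistribution
    fun n => ((hA n).measurable.prodMk measurable_id).aemeasurable
  have hBd := hBc.id_prodMk.tendstoInDistribution
    fun n => (measurable_id.prodMk (hB n)).aemeasurable
  have hlaw n : μ.map (fun x => (A n x, x)) = ν.map (fun y => (y, B n y)) :=
    map_prodMk_id_eq_map_id_prodMk_of_leftInverse (hA n) (hB n) (hinv n)
  have hlim := tendsto_nhds_unique (X := ProbabilityMeasure (β × α))
    (hAd.tendsto.congr fun n => Subtype.ext (hlaw n)) hBd.tendsto
  simpa using congrArg Subtype.val hlim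

end MeasureTheory

theorem limit_of_measure_preserving_in_measure_general
    (T S : ℕ → ℝ → ℝ) (Tl Sl : ℝ → ℝ)
    (hT : ∀ n, MeasurePreserving (T n) μ01 μ01)
    (hS : ∀ n, MeasurePreserving (S n) μ01 μ01)
    (hinv₁ : ∀ n, ∀ᵐ x ∂μ01, S n (T n x) = x)
    (hinv₂ : ∀ n, ∀ᵐ x ∂μ01, T n (S n x) = x)
    (hTl : TendstoInMeasure μ01 T atTop Tl)
    (hSl : TendstoInMeasure μ01 S atTop Sl) :
    ∃ T' S' : ℝ → ℝ,
      T' =ᵐ[μ01] Tl ∧ S' =ᵐ[μ01] Sl ∧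
      MeasurePreserving T' μ01 μ01 ∧ MeasurePreserving S' μ01 μ01 ∧
      (∀ᵐ x ∂μ01, S' (T' x) = x) ∧ (∀ᵐ x ∂μ01, T' (S' x) = x) := by
  have hTl_ae := hTl.aemeasurable fun n => (hT n).measurable.aemeasurable
  have hSl_ae := hSl.aemeasurable fun n => (hS n).measurable.aemeasurable
  have hT'm := hTl_ae.measurable_mk
  have hS'm := hSl_ae.measurable_mk
  have hTS := map_prodMk_id_eq_map_id_prodMk_of_tendstoInMeasure hT (fun n => (hS n).measurable)
    hinv₁ (hTl.congr_right hTl_ae.ae_eq_mk) (hSl.congr_right hSl_ae.ae_eq_mk)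
  have hST := map_prodMk_id_eq_map_id_prodMk_of_tendstoInMeasure hS (fun n => (hT n).measurable)
    hinv₂ (hSl.congr_right hSl_ae.ae_eq_mk) (hTl.congr_right hTl_ae.ae_eq_mk)
  exact ⟨_, _, hTl_ae.ae_eq_mk.symm, hSl_ae.ae_eq_mk.symm,
    measurePreserving_of_map_prodMk_id_eq_map_id_prodMk hT'm hS'm hTS,
    measurePreserving_of_map_prodMk_id_eq_map_id_prodMk hS'm hT'm hST,
    ae_comp_eq_self_of_map_prodMk_id_eq_map_id_prodMk hT'm hS'm hTS,
    ae_comp_eq_self_of_map_prodMk_id_eq_map_id_prodMk hS'm hT'm hST⟩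

theorem limit_of_measure_preserving_in_measure
    (T S : ℕ → ℝ → ℝ) (Tl Sl : ℝ → ℝ)
    (hTm : ∀ n, Measurable (T n)) (hSm : ∀ n, Measurable (S n))
    (hT : ∀ n, MeasurePreserving (T n) μ01 μ01)
    (hS : ∀ n, MeasurePreserving (S n) μ01 μ01)
    (hinv₁ : ∀ n, ∀ᵐ x ∂μ01, S n (T n x) = x)
    (hinv₂ : ∀ n, ∀ᵐ x ∂μ01, T n (S n x) = x)
    (hTl : TendstoInMeasure μ01 T atTop Tl)
    (hSl : TendstoInMeasure μ01 S atTop Sl) :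
    ∃ T' S' : ℝ → ℝ,
      T' =ᵐ[μ01] Tl ∧ S' =ᵐ[μ01] Sl ∧
      MeasurePreserving T' μ01 μ01 ∧ MeasurePreserving S' μ01 μ01 ∧
      (∀ᵐ x ∂μ01, S' (T' x) = x) ∧ (∀ᵐ x ∂μ01, T' (S' x) = x) :=
  limit_of_measure_preserving_in_measure_general T S Tl Sl hT hS hinv₁ hinv₂ hTl hSl
end

section
/- For even $d$, let $x_k\in\mathbb{R}^d$ ($k=1,\dots,d$) be given by $(x_k)_i=\delta_{ki}-\frac{1}{d}$ (vertices of a regular simplex centered at the origin). Then $\|x_k\|^2=\frac{d-1}{d}<1$, $\sum_{k=1}^d x_k=0$, and every sum $y$ of $d/2$ of these vectors (repetitions allowed) satisfies $\|y\|\ge\sqrt{d/8}$ in the Euclidean norm. -/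
/-!
Coordinatewise, a sum of `m` vertices is `y i = #{j | c j = i} - m / d`. For `m = d / 2` this is
an integer minus `1 / 2`, so `y i ^ 2 ≥ 1 / 4` in every one of the `d` coordinates and
`‖y‖ ^ 2 ≥ d / 4 ≥ d / 8`.
-/

open Finset

theorem quarter_le_intCast_sub_half_sq (n : ℤ) : (1 : ℝ) / 4 ≤ ((n : ℝ) - 1 / 2) ^ 2 := by
  have : (0 : ℤ) ≤ n * (n - 1) := by rcases le_or_gt n 0 with h | h <;> nlinarith
  have : (0 : ℝ) ≤ n * (n - 1) := by exact_mod_cast this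
  nlinarith

theorem EuclideanSpace.card_mul_le_norm_sq {ι : Type*} [Fintype ι] {a : ℝ}
    (v : EuclideanSpace ℝ ι) (h : ∀ i, a ≤ v i ^ 2) : Fintype.card ι * a ≤ ‖v‖ ^ 2 := by
  rw [EuclideanSpace.real_norm_sq_eq, ← nsmul_eq_mul, ← Finset.card_univ, ← Finset.sum_const]
  exact Finset.sum_le_sum fun i _ => h i

section SimplexVertices

variable {d : ℕ} {x : Fin d → EuclideanSpace ℝ (Fin d)}

theorem norm_sq_simplexVertex
    (hx : ∀ k i, x k i = (if k = i then (1 : ℝ) else 0) - 1 / (d : ℝ)) (k : Fin d) :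
    ‖x k‖ ^ 2 = ((d : ℝ) - 1) / d := by
  have hd : (d : ℝ) ≠ 0 := by exact_mod_cast k.pos.ne'
  have hsq : ∀ i, x k i ^ 2 = (if k = i then 1 - 2 / (d : ℝ) else 0) + 1 / (d : ℝ) ^ 2 := by
    intro i
    rw [hx]
    split_ifs <;> ring
  simp only [EuclideanSpace.real_norm_sq_eq, hsq, Finset.sum_add_distrib, Finset.sum_ite_eq,
    Finset.mem_univ, if_true, Finset.sum_const, Finset.card_univ, Fintype.card_fin, nsmul_eq_mul]
  field_simp
  ring

theorem sum_simplexVertices_apply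
    (hx : ∀ k i, x k i = (if k = i then (1 : ℝ) else 0) - 1 / (d : ℝ))
    {m : ℕ} (c : Fin m → Fin d) (i : Fin d) :
    (∑ j, x (c j)) i = #{j | c j = i} - (m : ℝ) / d := by
  simp only [WithLp.ofLp_sum, Finset.sum_apply, hx, Finset.sum_sub_distrib, Finset.sum_boole,
    Finset.sum_const, Finset.card_univ, Fintype.card_fin, nsmul_eq_mul]
  ring

theorem sum_simplexVertices_eq_zero
    (hx : ∀ k i, x k i = (if k = i then (1 : ℝ) else 0) - 1 / (d : ℝ)) : ∑ k, x k = 0 := by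
  ext i
  have hd : (d : ℝ) ≠ 0 := by exact_mod_cast i.pos.ne'
  simpa [Finset.filter_eq', hd] using sum_simplexVertices_apply hx id i

theorem sqrt_div_four_le_norm_sum_half_simplexVertices
    (hx : ∀ k i, x k i = (if k = i then (1 : ℝ) else 0) - 1 / (d : ℝ)) (hev : Even d)
    (c : Fin (d / 2) → Fin d) : Real.sqrt ((d : ℝ) / 4) ≤ ‖∑ j, x (c j)‖ := by
  have hcoord : ∀ i, (1 : ℝ) / 4 ≤ (∑ j, x (c j)) i ^ 2 := fun i => by
    have hd : (d : ℝ) ≠ 0 := by exact_mod_cast i.pos.ne'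
    have hhalf : ((d / 2 : ℕ) : ℝ) / d = 1 / 2 := by
      rw [Nat.cast_div hev.two_dvd two_ne_zero, Nat.cast_ofNat]
      field_simp
    rw [sum_simplexVertices_apply hx, hhalf]
    exact_mod_cast quarter_le_intCast_sub_half_sq #{j | c j = i}
  rw [Real.sqrt_le_left (norm_nonneg _)]
  simpa [div_eq_mul_one_div (d : ℝ)] using EuclideanSpace.card_mul_le_norm_sq _ hcoord

end SimplexVertices

theorem simplex_vertices_sum_lower_bound_general (d : ℕ) (hev : Even d)
    (x : Fin d → EuclideanSpace ℝ (Fin d))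
    (hx : ∀ k i, x k i = (if k = i then (1 : ℝ) else 0) - 1 / (d : ℝ)) :
    (∀ k, ‖x k‖ ^ 2 = ((d : ℝ) - 1) / d) ∧
    (∀ k, ‖x k‖ ^ 2 < 1) ∧
    (∑ k, x k = 0) ∧
    ∀ c : Fin (d / 2) → Fin d, Real.sqrt ((d : ℝ) / 8) ≤ ‖∑ j, x (c j)‖ := by
  refine ⟨norm_sq_simplexVertex hx, fun k => ?_, sum_simplexVertices_eq_zero hx, fun c => ?_⟩
  · have hd : (0 : ℝ) < d := by exact_mod_cast k.pos
    rw [norm_sq_simplexVertex hx, div_lt_one hd]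
    linarith
  · refine le_trans (Real.sqrt_le_sqrt ?_) (sqrt_div_four_le_norm_sum_half_simplexVertices hx hev c)
    linarith [(Nat.cast_nonneg d : (0 : ℝ) ≤ d)]

theorem simplex_vertices_sum_lower_bound (d : ℕ) (hd : 0 < d) (hev : Even d)
    (x : Fin d → EuclideanSpace ℝ (Fin d))
    (hx : ∀ k i, x k i = (if k = i then (1 : ℝ) else 0) - 1 / (d : ℝ)) :
    (∀ k, ‖x k‖ ^ 2 = ((d : ℝ) - 1) / d) ∧
    (∀ k, ‖x k‖ ^ 2 < 1) ∧
    (∑ k, x k = 0) ∧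
    ∀ c : Fin (d / 2) → Fin d, Real.sqrt ((d : ℝ) / 8) ≤ ‖∑ j, x (c j)‖ :=
  simplex_vertices_sum_lower_bound_general d hev x hx
end
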